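/- arXiv:2506.19149 — 9 statements merged into one kernel-verified Lean document; each statement's English description precedes it below -/
import Mathlib

section
/- If G is a graph, F is a set of graphs, X is a subset of V(G), and Y is a subset of the closed neighbourhood N[X] of X, then ι(G,F) ≤ |X| + ι(G−Y,F), where ι(H,F) denotes the minimum size of a set D ⊆ V(H) such that H − N[D] contains no copy of a graph in F. -/
/-!
Given a minimum `F`-isolating set `D'` of `G − Y`, the set `X ∪ D'` isolates `F` in `G`:
its closed neighbourhood contains `N[X] ⊇ Y`, so a copy of a graph of `F` in `G − N[X ∪ D']`
lies in `G − Y` and avoids `N[D']` there, which is impossible. If some graph of `F` is empty,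
no graph has an isolating set and both isolation numbers are `sInf ∅ = 0`.
-/

open SimpleGraph

/-- The closed neighbourhood `N[D]` of a set `D` of vertices in a graph `G`. -/
def closedNbhd {V : Type*} (G : SimpleGraph V) (D : Set V) : Set V :=
  D ∪ {v | ∃ d ∈ D, G.Adj d v}

/-- `G` contains a (not necessarily induced) copy of `H`. -/
def ContainsCopy {α β : Type*} (G : SimpleGraph α) (H : SimpleGraph β) : Prop :=
  ∃ f : β ↪ α, ∀ a b, H.Adj a b → G.Adj (f a) (f b)

/-- `D` is a `P₃`-isolating set of `G`: `G − N[D]` contains no 3-vertex path. -/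
def IsP3IsolatingSet {V : Type*} (G : SimpleGraph V) (D : Set V) : Prop :=
  ¬ ContainsCopy (SimpleGraph.induce (closedNbhd G D)ᶜ G) (SimpleGraph.pathGraph 3)

/-- The `P₃`-isolation number of `G`. -/
noncomputable def iotaP3 {V : Type*} (G : SimpleGraph V) : ℕ :=
  sInf {m | ∃ D : Set V, IsP3IsolatingSet G D ∧ D.ncard = m}

/-- `G` has an induced 6-cycle. -/
def HasInducedC6 {V : Type*} (G : SimpleGraph V) : Prop :=
  ∃ f : Fin 6 ↪ V, ∀ a b, G.Adj (f a) (f b) ↔ (SimpleGraph.cycleGraph 6).Adj a b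

/-- A family version of isolating sets: `D` is an `F`-isolating set of `G`. -/
def IsIsolatingSet {V : Type*} {ι : Type*} {β : ι → Type*} (G : SimpleGraph V)
    (F : ∀ i, SimpleGraph (β i)) (D : Set V) : Prop :=
  ∀ i, ¬ ContainsCopy (SimpleGraph.induce (closedNbhd G D)ᶜ G) (F i)

/-- The `F`-isolation number of `G`. -/
noncomputable def iota {V : Type*} {ι : Type*} {β : ι → Type*} (G : SimpleGraph V)
    (F : ∀ i, SimpleGraph (β i)) : ℕ :=
  sInf {m | ∃ D : Set V, IsIsolatingSet G F D ∧ D.ncard = m}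

section ContainsCopy

variable {α α' β : Type*} {G : SimpleGraph α} {G' : SimpleGraph α'}

theorem containsCopy_of_isEmpty (G : SimpleGraph α) (H : SimpleGraph β) [IsEmpty β] :
    ContainsCopy G H :=
  ⟨Function.Embedding.ofIsEmpty, fun a => isEmptyElim a⟩

theorem ContainsCopy.of_hom {H : SimpleGraph β} (h : ContainsCopy G H) (φ : G →g G')
    (hφ : Function.Injective φ) : ContainsCopy G' H := by
  obtain ⟨f, hf⟩ := h
  exact ⟨f.trans ⟨φ, hφ⟩, fun a b hab => φ.map_adj (hf a b hab)⟩

end ContainsCopy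

section ClosedNbhd

variable {V : Type*} (G : SimpleGraph V)

theorem closedNbhd_mono {D D' : Set V} (h : D ⊆ D') : closedNbhd G D ⊆ closedNbhd G D' := by
  rintro v (hv | ⟨d, hd, hadj⟩)
  · exact Or.inl (h hv)
  · exact Or.inr ⟨d, h hd, hadj⟩

theorem image_closedNbhd_induce_subset (s : Set V) (D : Set s) :
    Subtype.val '' closedNbhd (G.induce s) D ⊆ closedNbhd G (Subtype.val '' D) := by
  rintro _ ⟨v, hv | ⟨d, hd, hadj⟩, rfl⟩
  · exact Or.inl ⟨v, hv, rfl⟩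
  · exact Or.inr ⟨d, ⟨d, hd, rfl⟩, hadj⟩

end ClosedNbhd

section Isolation

variable {V ι : Type*} {β : ι → Type*} {G : SimpleGraph V} {F : ∀ i, SimpleGraph (β i)}

theorem isIsolatingSet_univ [∀ i, Nonempty (β i)] (G : SimpleGraph V) :
    IsIsolatingSet G F Set.univ := by
  rintro i ⟨f, -⟩
  exact (f (Classical.arbitrary _)).2 (Or.inl (Set.mem_univ _))

theorem iota_le_ncard {D : Set V} (hD : IsIsolatingSet G F D) : iota G F ≤ D.ncard :=
  Nat.sInf_le ⟨D, hD, rfl⟩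

theorem exists_isIsolatingSet_ncard_eq_iota [∀ i, Nonempty (β i)] (G : SimpleGraph V)
    (F : ∀ i, SimpleGraph (β i)) : ∃ D, IsIsolatingSet G F D ∧ D.ncard = iota G F :=
  Nat.sInf_mem (s := {m | ∃ D : Set V, IsIsolatingSet G F D ∧ D.ncard = m})
    ⟨_, Set.univ, isIsolatingSet_univ G, rfl⟩

theorem iota_eq_zero_of_isEmpty (i : ι) [IsEmpty (β i)] (G : SimpleGraph V) : iota G F = 0 := by
  have hnone : {m | ∃ D : Set V, IsIsolatingSet G F D ∧ D.ncard = m} = ∅ :=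
    Set.eq_empty_of_forall_notMem fun _ ⟨_, hD, _⟩ => hD i (containsCopy_of_isEmpty _ _)
  rw [iota, hnone, Nat.sInf_empty]

theorem IsIsolatingSet.union_image_of_induce_compl {X Y : Set V} (hY : Y ⊆ closedNbhd G X)
    {D : Set ↥Yᶜ} (hD : IsIsolatingSet (G.induce Yᶜ) F D) :
    IsIsolatingSet G F (X ∪ Subtype.val '' D) := by
  set N := closedNbhd G (X ∪ Subtype.val '' D)
  have hY_sub : Y ⊆ N := hY.trans (closedNbhd_mono G Set.subset_union_left)
  have hD_sub : Subtype.val '' closedNbhd (G.induce Yᶜ) D ⊆ N :=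
    (image_closedNbhd_induce_subset G _ D).trans (closedNbhd_mono G Set.subset_union_right)
  let φ : G.induce Nᶜ →g (G.induce Yᶜ).induce (closedNbhd (G.induce Yᶜ) D)ᶜ :=
    { toFun := fun v => ⟨⟨v, fun hv => v.2 (hY_sub hv)⟩, fun hv => v.2 (hD_sub ⟨_, hv, rfl⟩)⟩
      map_rel' := id }
  exact fun i hcopy => hD i (hcopy.of_hom φ fun v w h => Subtype.ext (congrArg (·.1.1) h))

end Isolation

theorem stmt_0_general {V : Type*} {ι : Type*} {β : ι → Type*}
    (G : SimpleGraph V) (F : ∀ i, SimpleGraph (β i)) (X Y : Set V)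
    (hY : Y ⊆ closedNbhd G X) :
    iota G F ≤ X.ncard + iota (SimpleGraph.induce Yᶜ G) F := by
  by_cases hempty : ∃ i, IsEmpty (β i)
  · obtain ⟨i, _⟩ := hempty
    rw [iota_eq_zero_of_isEmpty i G]
    exact Nat.zero_le _
  · have : ∀ i, Nonempty (β i) := fun i => not_isEmpty_iff.mp fun h => hempty ⟨i, h⟩
    obtain ⟨D, hD, hcard⟩ := exists_isIsolatingSet_ncard_eq_iota (G.induce Yᶜ) F
    calc iota G F ≤ (X ∪ Subtype.val '' D).ncard := iota_le_ncard (hD.union_image_of_induce_compl hY)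
      _ ≤ X.ncard + (Subtype.val '' D).ncard := Set.ncard_union_le _ _
      _ = X.ncard + iota (G.induce Yᶜ) F := by
        rw [Set.ncard_image_of_injective _ Subtype.val_injective, hcard]

theorem stmt_0 {V : Type*} [Fintype V] {ι : Type*} {β : ι → Type*}
    (G : SimpleGraph V) (F : ∀ i, SimpleGraph (β i)) (X Y : Set V)
    (hY : Y ⊆ closedNbhd G X) :
    iota G F ≤ X.ncard + iota (SimpleGraph.induce Yᶜ G) F :=
  stmt_0_general G F X Y hY
end

section
/- For the path P_n on n ≥ 1 vertices, the P_3-isolation number satisfies ι(P_n, P_3) ≤ ⌊n/4⌋ when n ≥ 4. -/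
open SimpleGraph

lemma key_lem (n : ℕ) (v : Fin n)
    (hv : v ∉ closedNbhd (SimpleGraph.pathGraph n) {w : Fin n | (w : ℕ) % 4 = 3}) :
    (v : ℕ) % 4 ≠ 3 ∧ ((v : ℕ) + 1 < n → ((v : ℕ) + 1) % 4 ≠ 3) ∧
      (1 ≤ (v : ℕ) → ((v : ℕ) - 1) % 4 ≠ 3) := by
  simp only [closedNbhd, Set.mem_union, Set.mem_setOf_eq, not_or, not_exists, not_and] at hv
  obtain ⟨h1, h2⟩ := hv
  refine ⟨h1, ?_, ?_⟩
  · intro hlt hmod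
    exact h2 ⟨(v : ℕ) + 1, hlt⟩ hmod (by rw [pathGraph_adj]; right; rfl)
  · intro hle hmod
    refine h2 ⟨(v : ℕ) - 1, by omega⟩ hmod ?_
    rw [pathGraph_adj]; left; simp; omega

theorem stmt_2 (n : ℕ) (hn : 4 ≤ n) :
    iotaP3 (SimpleGraph.pathGraph n) ≤ n / 4 := by
  apply Nat.sInf_le
  refine ⟨{w : Fin n | (w : ℕ) % 4 = 3}, ?_, ?_⟩
  · rintro ⟨f, hf⟩
    have h01 : (SimpleGraph.pathGraph 3).Adj 0 1 := by rw [pathGraph_adj]; left; rfl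
    have h12 : (SimpleGraph.pathGraph 3).Adj 1 2 := by rw [pathGraph_adj]; left; rfl
    have hab : (SimpleGraph.pathGraph n).Adj ((f 0 : Fin n)) ((f 1 : Fin n)) := hf 0 1 h01
    have hbc : (SimpleGraph.pathGraph n).Adj ((f 1 : Fin n)) ((f 2 : Fin n)) := hf 1 2 h12
    rw [pathGraph_adj] at hab hbc
    have hac : ((f 0 : Fin n) : ℕ) ≠ ((f 2 : Fin n) : ℕ) := by
      intro h
      have h2 : f 0 = f 2 := Subtype.ext (Fin.ext h)
      have := f.injective h2
      simp at this
    have k0 := key_lem n (f 0) (f 0).2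
    have k1 := key_lem n (f 1) (f 1).2
    have k2 := key_lem n (f 2) (f 2).2
    have l0 : ((f 0 : Fin n) : ℕ) < n := (f 0 : Fin n).isLt
    have l1 : ((f 1 : Fin n) : ℕ) < n := (f 1 : Fin n).isLt
    have l2 : ((f 2 : Fin n) : ℕ) < n := (f 2 : Fin n).isLt
    omega
  · have : {w : Fin n | (w : ℕ) % 4 = 3} =
        ↑(Finset.univ.filter (fun w : Fin n => (w : ℕ) % 4 = 3)) := by
      ext w; simp
    rw [this, Set.ncard_coe_finset]
    rw [← Finset.card_range (n / 4)]
    refine Finset.card_bij' (fun (v : Fin n) _ => (v : ℕ) / 4)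
        (fun k hk => (⟨4 * k + 3, ?_⟩ : Fin n)) ?_ ?_ ?_ ?_
    · simp only [Finset.mem_range] at hk; omega
    · intro a ha
      simp only [Finset.mem_filter, Finset.mem_univ, true_and] at ha
      simp only [Finset.mem_range]
      have := a.isLt
      omega
    · intro k hk
      simp only [Finset.mem_range] at hk
      simp only [Finset.mem_filter, Finset.mem_univ, true_and]
      omega
    · intro a ha
      simp only [Finset.mem_filter, Finset.mem_univ, true_and] at ha
      apply Fin.ext
      simp only []
      omega
    · intro k hk
      simp only [Finset.mem_range] at hk
      simp only []
      omega
end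

section
/- For the cycle C_n on n ≥ 3 vertices, the set {5k−4 : k ∈ ℕ, 5k−4 ≤ n} is a P_3-isolating set of C_n of size ⌊(n+4)/5⌋, and hence ι(C_n, P_3) ≤ ⌊(n+4)/5⌋. -/
open SimpleGraph

lemma val_one'' {n : ℕ} (hn : 2 ≤ n) [NeZero n] : (1 : Fin n).val = 1 := by
  simp [Fin.val_one', Nat.mod_eq_of_lt hn]

lemma adj_succ' {n : ℕ} (hn : 2 ≤ n) [NeZero n] (d : Fin n) :
    (SimpleGraph.cycleGraph n).Adj d (d + 1) := by
  rw [cycleGraph_adj']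
  right
  rw [add_sub_cancel_left, val_one'' hn]

lemma adj_iff' {n : ℕ} (hn : 2 ≤ n) [NeZero n] (u v : Fin n) :
    (SimpleGraph.cycleGraph n).Adj u v ↔ u = v + 1 ∨ v = u + 1 := by
  rw [cycleGraph_adj']
  have h1 : (1 : Fin n).val = 1 := val_one'' hn
  constructor
  · rintro (h | h)
    · left
      have h2 : u - v = 1 := Fin.ext (by rw [h, h1])
      rw [sub_eq_iff_eq_add] at h2
      rw [h2, add_comm]
    · right
      have h2 : v - u = 1 := Fin.ext (by rw [h, h1])
      rw [sub_eq_iff_eq_add] at h2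
      rw [h2, add_comm]
  · rintro (h | h)
    · left; rw [h, add_sub_cancel_left, h1]
    · right; rw [h, add_sub_cancel_left, h1]

lemma adj_of_eq_add {n : ℕ} (hn : 2 ≤ n) [NeZero n] (w d : Fin n) (h : w = d + 1) :
    (SimpleGraph.cycleGraph n).Adj d w := by
  subst h; exact adj_succ' hn d

lemma adj_of_eq_add' {n : ℕ} (hn : 2 ≤ n) [NeZero n] (w d : Fin n) (h : d = w + 1) :
    (SimpleGraph.cycleGraph n).Adj d w := by
  subst h; exact (adj_succ' hn w).symm

lemma memD {n : ℕ} (v : Fin n) (h : (v : ℕ) % 5 = 0) :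
    v ∈ {v : Fin n | ∃ k : ℕ, 1 ≤ k ∧ (v : ℕ) + 1 = 5 * k - 4} :=
  ⟨(v : ℕ) / 5 + 1, by omega, by omega⟩

lemma memN {n : ℕ} (hn : 3 ≤ n) [NeZero n] (w : Fin n)
    (h : (w : ℕ) % 5 = 0 ∨ (w : ℕ) % 5 = 1 ∨ (w : ℕ) % 5 = 4) :
    w ∈ closedNbhd (SimpleGraph.cycleGraph n)
      {v : Fin n | ∃ k : ℕ, 1 ≤ k ∧ (v : ℕ) + 1 = 5 * k - 4} := by
  have hn2 : 2 ≤ n := by omega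
  rcases h with h0 | h1 | h4
  · exact Or.inl (memD w h0)
  · have hw1 : 1 ≤ (w : ℕ) := by omega
    refine Or.inr ⟨⟨(w : ℕ) - 1, by omega⟩, memD _ (by simp; omega), ?_⟩
    refine adj_of_eq_add hn2 _ _ (Fin.ext ?_)
    rw [Fin.val_add, val_one'' hn2, Nat.sub_add_cancel hw1, Nat.mod_eq_of_lt w.isLt]
  · by_cases hw : (w : ℕ) + 1 < n
    · refine Or.inr ⟨⟨(w : ℕ) + 1, hw⟩, memD _ (by simp; omega), ?_⟩
      refine adj_of_eq_add' hn2 _ _ (Fin.ext ?_)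
      rw [Fin.val_add, val_one'' hn2]
      simp [Nat.mod_eq_of_lt hw]
    · have hwn : (w : ℕ) + 1 = n := by omega
      refine Or.inr ⟨0, memD _ (by simp), ?_⟩
      refine adj_of_eq_add' hn2 _ _ (Fin.ext ?_)
      rw [Fin.val_add, val_one'' hn2, hwn]
      simp

lemma keyLemma {n : ℕ} (hn : 3 ≤ n) [NeZero n] (b : Fin n) :
    b - 1 ∈ closedNbhd (SimpleGraph.cycleGraph n)
        {v : Fin n | ∃ k : ℕ, 1 ≤ k ∧ (v : ℕ) + 1 = 5 * k - 4} ∨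
    b ∈ closedNbhd (SimpleGraph.cycleGraph n)
        {v : Fin n | ∃ k : ℕ, 1 ≤ k ∧ (v : ℕ) + 1 = 5 * k - 4} ∨
    b + 1 ∈ closedNbhd (SimpleGraph.cycleGraph n)
        {v : Fin n | ∃ k : ℕ, 1 ≤ k ∧ (v : ℕ) + 1 = 5 * k - 4} := by
  have hn2 : 2 ≤ n := by omega
  set m := (b : ℕ) with hm
  have hmlt : m < n := b.isLt
  by_cases h0 : m = 0
  · exact Or.inr (Or.inl (memN hn b (by omega)))
  by_cases hlast : m = n - 1
  · refine Or.inr (Or.inr (memN hn _ ?_))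
    rw [Fin.val_add, val_one'' hn2]
    have h2 : (m + 1) % n = 0 := by rw [show m + 1 = n by omega, Nat.mod_self]
    rw [h2]
    left; rfl
  · -- 1 ≤ m ≤ n - 2
    have hsub : ((b - 1 : Fin n) : ℕ) = m - 1 := by
      rw [Fin.sub_def]
      simp only [val_one'' hn2]
      have : n - 1 + m = (m - 1) + n := by omega
      rw [this, Nat.add_mod_right, Nat.mod_eq_of_lt (by omega)]
    have hadd : ((b + 1 : Fin n) : ℕ) = m + 1 := by
      rw [Fin.val_add, val_one'' hn2, Nat.mod_eq_of_lt (by omega)]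
    have hd : ((m-1) % 5 = 0 ∨ (m-1) % 5 = 1 ∨ (m-1) % 5 = 4) ∨
        (m % 5 = 0 ∨ m % 5 = 1 ∨ m % 5 = 4) ∨
        ((m+1) % 5 = 0 ∨ (m+1) % 5 = 1 ∨ (m+1) % 5 = 4) := by omega
    rcases hd with h | h | h
    · exact Or.inl (memN hn _ (by rw [hsub]; exact h))
    · exact Or.inr (Or.inl (memN hn _ h))
    · exact Or.inr (Or.inr (memN hn _ (by rw [hadd]; exact h)))

lemma part1 {n : ℕ} (hn : 3 ≤ n) :
    IsP3IsolatingSet (SimpleGraph.cycleGraph n)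
      {v : Fin n | ∃ k : ℕ, 1 ≤ k ∧ (v : ℕ) + 1 = 5 * k - 4} := by
  haveI : NeZero n := ⟨by omega⟩
  have hn2 : 2 ≤ n := by omega
  rintro ⟨f, hf⟩
  have hab : (SimpleGraph.cycleGraph n).Adj ↑(f 0) ↑(f 1) :=
    hf 0 1 (by rw [pathGraph_adj]; left; rfl)
  have hbc : (SimpleGraph.cycleGraph n).Adj ↑(f 1) ↑(f 2) :=
    hf 1 2 (by rw [pathGraph_adj]; left; rfl)
  rw [adj_iff' hn2] at hab hbc
  have h0 : (↑(f 0) : Fin n) ∉ closedNbhd (SimpleGraph.cycleGraph n)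
      {v : Fin n | ∃ k : ℕ, 1 ≤ k ∧ (v : ℕ) + 1 = 5 * k - 4} := (f 0).2
  have h1 : (↑(f 1) : Fin n) ∉ closedNbhd (SimpleGraph.cycleGraph n)
      {v : Fin n | ∃ k : ℕ, 1 ≤ k ∧ (v : ℕ) + 1 = 5 * k - 4} := (f 1).2
  have h2 : (↑(f 2) : Fin n) ∉ closedNbhd (SimpleGraph.cycleGraph n)
      {v : Fin n | ∃ k : ℕ, 1 ≤ k ∧ (v : ℕ) + 1 = 5 * k - 4} := (f 2).2
  rcases hab with ha | ha <;> rcases hbc with hc | hc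
  · -- f0 = f1 + 1, f1 = f2 + 1 hence f2 = f1 - 1
    have hc' : (↑(f 2) : Fin n) = ↑(f 1) - 1 := by rw [hc, add_sub_cancel_right]
    rcases keyLemma hn (↑(f 1) : Fin n) with hk | hk | hk
    · exact h2 (by rw [hc']; exact hk)
    · exact h1 hk
    · exact h0 (by rw [ha]; exact hk)
  · -- f0 = f1 + 1, f2 = f1 + 1
    have : f 0 = f 2 := Subtype.ext (ha.trans hc.symm)
    exact absurd (f.injective this) (by decide)
  · -- f1 = f0 + 1 hence f0 = f1 - 1, f1 = f2 + 1 hence f2 = f1 - 1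
    have ha' : (↑(f 0) : Fin n) = ↑(f 1) - 1 := by rw [ha, add_sub_cancel_right]
    have hc' : (↑(f 2) : Fin n) = ↑(f 1) - 1 := by rw [hc, add_sub_cancel_right]
    have : f 0 = f 2 := Subtype.ext (ha'.trans hc'.symm)
    exact absurd (f.injective this) (by decide)
  · -- f0 = f1 - 1, f2 = f1 + 1
    have ha' : (↑(f 0) : Fin n) = ↑(f 1) - 1 := by rw [ha, add_sub_cancel_right]
    rcases keyLemma hn (↑(f 1) : Fin n) with hk | hk | hk
    · exact h0 (by rw [ha']; exact hk)
    · exact h1 hk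
    · exact h2 (by rw [hc]; exact hk)

lemma countLemma (n : ℕ) :
    ((Finset.range n).filter fun i => i % 5 = 0).card = (n + 4) / 5 := by
  induction n with
  | zero => simp
  | succ n ih =>
    rw [Finset.range_add_one, Finset.filter_insert]
    by_cases h : n % 5 = 0
    · rw [if_pos h, Finset.card_insert_of_notMem (by simp), ih]; omega
    · rw [if_neg h, ih]; omega

lemma part2 {n : ℕ} :
    ({v : Fin n | ∃ k : ℕ, 1 ≤ k ∧ (v : ℕ) + 1 = 5 * k - 4} : Set (Fin n)).ncard
      = (n + 4) / 5 := by
  have hEq : ({v : Fin n | ∃ k : ℕ, 1 ≤ k ∧ (v : ℕ) + 1 = 5 * k - 4} : Set (Fin n))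
      = ↑(Finset.univ.filter fun v : Fin n => (v : ℕ) % 5 = 0) := by
    ext v
    simp only [Set.mem_setOf_eq, Finset.coe_filter, Finset.mem_univ, true_and]
    constructor
    · rintro ⟨k, hk1, hk2⟩; omega
    · intro h; exact ⟨(v : ℕ) / 5 + 1, by omega, by omega⟩
  rw [hEq, Set.ncard_coe_finset, ← countLemma n]
  refine Finset.card_bij (fun v _ => (v : ℕ)) ?_ ?_ ?_
  · intro a ha
    simp only [Finset.mem_filter, Finset.mem_univ, true_and] at ha
    simp only [Finset.mem_filter, Finset.mem_range]
    exact ⟨a.isLt, ha⟩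
  · intro a _ b _ hab
    exact Fin.ext hab
  · intro b hb
    simp only [Finset.mem_filter, Finset.mem_range] at hb
    exact ⟨⟨b, hb.1⟩, by simp [hb.2], rfl⟩

theorem stmt_3 (n : ℕ) (hn : 3 ≤ n) :
    IsP3IsolatingSet (SimpleGraph.cycleGraph n)
      {v : Fin n | ∃ k : ℕ, 1 ≤ k ∧ (v : ℕ) + 1 = 5 * k - 4} ∧
    ({v : Fin n | ∃ k : ℕ, 1 ≤ k ∧ (v : ℕ) + 1 = 5 * k - 4} : Set (Fin n)).ncard
      = (n + 4) / 5 ∧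
    iotaP3 (SimpleGraph.cycleGraph n) ≤ (n + 4) / 5 := by
  refine ⟨part1 hn, part2, ?_⟩
  exact Nat.sInf_le ⟨_, part1 hn, part2⟩
end

section
/- For every n ≥ 4 with n ≠ 6, ι(C_n, P_3) ≤ (n+1)/4, i.e., 4·ι(C_n,P_3) ≤ n+1. -/
open SimpleGraph

lemma fin_sub_val' {n : ℕ} (a b : Fin n) : (a - b).val = (a.val + (n - b.val)) % n := by
  rw [Fin.sub_def]
  simp only []
  congr 1
  omega

lemma fin_val_one'' {n : ℕ} [NeZero n] (hn : 2 ≤ n) : ((1 : Fin n)).val = 1 := by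
  rw [Fin.val_one']
  exact Nat.mod_eq_of_lt (by omega)

lemma fin_sub_val_eq_one {n : ℕ} [NeZero n] (hn : 2 ≤ n) (a b : Fin n)
    (h : a.val = b.val + 1 ∨ (a.val = 0 ∧ b.val + 1 = n)) : (a - b).val = 1 := by
  have hb := b.isLt
  have ha := a.isLt
  rw [fin_sub_val']
  have hh : a.val + (n - b.val) = n + 1 ∨ a.val + (n - b.val) = 1 := by omega
  rcases hh with hh | hh
  · rw [hh, Nat.add_mod_left]
    exact Nat.mod_eq_of_lt (by omega)
  · rw [hh]
    exact Nat.mod_eq_of_lt (by omega)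

lemma cycle_adj_succ {n : ℕ} [NeZero n] (hn : 2 ≤ n) (a b : Fin n)
    (h : a.val = b.val + 1 ∨ b.val = a.val + 1 ∨ (a.val = 0 ∧ b.val + 1 = n) ∨
      (b.val = 0 ∧ a.val + 1 = n)) :
    (cycleGraph n).Adj a b := by
  rw [cycleGraph_adj']
  rcases h with h | h | h | h
  · exact Or.inl (fin_sub_val_eq_one hn a b (Or.inl h))
  · exact Or.inr (fin_sub_val_eq_one hn b a (Or.inl h))
  · exact Or.inl (fin_sub_val_eq_one hn a b (Or.inr h))
  · exact Or.inr (fin_sub_val_eq_one hn b a (Or.inr h))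

lemma cycle_adj_cases {n : ℕ} [NeZero n] (hn : 2 ≤ n) {a b : Fin n}
    (h : (cycleGraph n).Adj a b) : a = b + 1 ∨ a = b - 1 := by
  rw [cycleGraph_adj'] at h
  have h1 : ((1 : Fin n)).val = 1 := fin_val_one'' hn
  rcases h with h | h
  · left
    have h2 : a - b = 1 := Fin.ext (by rw [h, h1])
    exact (sub_eq_iff_eq_add.mp h2).trans (add_comm 1 b)
  · right
    have h2 : b - a = 1 := Fin.ext (by rw [h, h1])
    have hb : b = 1 + a := sub_eq_iff_eq_add.mp h2
    exact eq_sub_iff_add_eq.mpr (by rw [hb, add_comm])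

lemma fin_val_sub_one {n : ℕ} [NeZero n] (hn : 2 ≤ n) (v : Fin n) (h : v.val ≠ 0) :
    (v - 1).val = v.val - 1 := by
  have hv := v.isLt
  rw [fin_sub_val', fin_val_one'' hn]
  have : v.val + (n - 1) = n + (v.val - 1) := by omega
  rw [this, Nat.add_mod_left]
  exact Nat.mod_eq_of_lt (by omega)

lemma fin_val_add_one {n : ℕ} [NeZero n] (hn : 2 ≤ n) (v : Fin n) :
    (v + 1).val = (v.val + 1) % n := by
  rw [Fin.add_def, fin_val_one'' hn]

lemma isolating_of_dom {n : ℕ} [NeZero n] (hn : 2 ≤ n) (D : Set (Fin n))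
    (hdom : ∀ v : Fin n, v ∈ closedNbhd (cycleGraph n) D ∨
      v - 1 ∈ closedNbhd (cycleGraph n) D ∨ v + 1 ∈ closedNbhd (cycleGraph n) D) :
    IsP3IsolatingSet (cycleGraph n) D := by
  rintro ⟨f, hf⟩
  have h01 : (pathGraph 3).Adj 0 1 := by rw [pathGraph_adj]; left; rfl
  have h21 : (pathGraph 3).Adj 2 1 := by rw [pathGraph_adj]; right; rfl
  have ha : (cycleGraph n).Adj ((f 0 : _) : Fin n) ((f 1 : _) : Fin n) := hf 0 1 h01
  have hc : (cycleGraph n).Adj ((f 2 : _) : Fin n) ((f 1 : _) : Fin n) := hf 2 1 h21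
  have hac : ((f 0 : _) : Fin n) ≠ ((f 2 : _) : Fin n) := by
    intro h
    have := f.injective (Subtype.ext h)
    exact absurd this (by decide)
  have ha' := cycle_adj_cases hn ha
  have hc' := cycle_adj_cases hn hc
  have hb0 : ((f 1 : _) : Fin n) ∉ closedNbhd (cycleGraph n) D := (f 1).2
  have hb1 : ((f 0 : _) : Fin n) ∉ closedNbhd (cycleGraph n) D := (f 0).2
  have hb2 : ((f 2 : _) : Fin n) ∉ closedNbhd (cycleGraph n) D := (f 2).2
  rcases hdom ((f 1 : _) : Fin n) with h | h | h
  · exact hb0 h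
  · rcases ha' with h1 | h1 <;> rcases hc' with h2 | h2
    · exact hac (h1.trans h2.symm)
    · exact hb2 (h2 ▸ h)
    · exact hb1 (h1 ▸ h)
    · exact hac (h1.trans h2.symm)
  · rcases ha' with h1 | h1 <;> rcases hc' with h2 | h2
    · exact hb1 (h1 ▸ h)
    · exact hb1 (h1 ▸ h)
    · exact hb2 (h2 ▸ h)
    · exact hac (h1.trans h2.symm)

theorem stmt_4 (n : ℕ) (hn : 4 ≤ n) (hn6 : n ≠ 6) :
    4 * iotaP3 (SimpleGraph.cycleGraph n) ≤ n + 1 := by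
  have hn0 : 0 < n := by omega
  haveI : NeZero n := ⟨by omega⟩
  set k : ℕ := (n + 4) / 5 with hk
  set F : Finset (Fin n) :=
    (Finset.range k).image (fun i => (⟨5 * i % n, Nat.mod_lt _ hn0⟩ : Fin n)) with hF
  set D : Set (Fin n) := ↑F with hD
  have hmemD : ∀ i : ℕ, i < k → ∀ d : Fin n, d.val = 5 * i → d ∈ D := by
    intro i hi d hd
    have h5i : 5 * i < n := by omega
    rw [hD, Finset.mem_coe, hF, Finset.mem_image]
    exact ⟨i, Finset.mem_range.mpr hi, Fin.ext (by simp [Nat.mod_eq_of_lt h5i, hd])⟩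
  have hinN : ∀ (w : Fin n) (i : ℕ), i < k →
      (w.val = 5 * i ∨ 5 * i = w.val + 1 ∨ w.val = 5 * i + 1 ∨
        (5 * i = 0 ∧ w.val + 1 = n) ∨ (w.val = 0 ∧ 5 * i + 1 = n)) →
      w ∈ closedNbhd (SimpleGraph.cycleGraph n) D := by
    intro w i hi h
    have h5i : 5 * i < n := by omega
    set d : Fin n := ⟨5 * i, h5i⟩ with hd
    have hdD : d ∈ D := hmemD i hi d rfl
    rcases h with h | h
    · exact Or.inl (by rwa [show w = d from Fin.ext (by simp [hd, h])])
    · refine Or.inr ⟨d, hdD, cycle_adj_succ (by omega) d w ?_⟩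
      simp only [hd]
      omega
  have hdom : ∀ v : Fin n, v ∈ closedNbhd (SimpleGraph.cycleGraph n) D ∨
      v - 1 ∈ closedNbhd (SimpleGraph.cycleGraph n) D ∨
      v + 1 ∈ closedNbhd (SimpleGraph.cycleGraph n) D := by
    intro v
    have hvn := v.isLt
    set q : ℕ := v.val / 5 with hq
    have hqk : q < k := by omega
    have hr : v.val % 5 = 0 ∨ v.val % 5 = 1 ∨ v.val % 5 = 2 ∨ v.val % 5 = 3 ∨
        v.val % 5 = 4 := by omega
    rcases hr with hr | hr | hr | hr | hr
    · exact Or.inl (hinN v q hqk (by omega))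
    · exact Or.inl (hinN v q hqk (by omega))
    · refine Or.inr (Or.inl (hinN (v - 1) q hqk ?_))
      rw [fin_val_sub_one (by omega) v (by omega)]
      omega
    · refine Or.inr (Or.inr ?_)
      have hval : (v + 1).val = (v.val + 1) % n := fin_val_add_one (by omega) v
      by_cases hbig : v.val + 1 < n
      · rw [Nat.mod_eq_of_lt hbig] at hval
        by_cases hq1 : 5 * (q + 1) < n
        · exact hinN (v + 1) (q + 1) (by omega) (by omega)
        · exact hinN (v + 1) 0 (by omega) (by omega)
      · have : (v + 1).val = 0 := by
          rw [hval]; have : v.val + 1 = n := by omega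
          rw [this, Nat.mod_self]
        exact hinN (v + 1) 0 (by omega) (by omega)
    · by_cases hq1 : 5 * (q + 1) < n
      · exact Or.inl (hinN v (q + 1) (by omega) (by omega))
      · exact Or.inl (hinN v 0 (by omega) (by omega))
  have hiso : IsP3IsolatingSet (SimpleGraph.cycleGraph n) D :=
    isolating_of_dom (by omega) D hdom
  have hcard : D.ncard ≤ k := by
    rw [hD, Set.ncard_coe_finset]
    calc F.card ≤ (Finset.range k).card := Finset.card_image_le
      _ = k := Finset.card_range k
  have hle : iotaP3 (SimpleGraph.cycleGraph n) ≤ D.ncard :=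
    Nat.sInf_le ⟨D, hiso, rfl⟩
  have : 4 * k ≤ n + 1 := by omega
  omega
end

section
/- For every k ≥ 1, the graph B_k^* (defined below, with 4k−1 vertices) contains no induced 6-cycle. -/
open SimpleGraph

/-- Edge relation (on `ℕ`-labels) of the graph `B_k^*`: blocks `i < k-1` are copies of
`K₄⁻` on `4i, 4i+1, 4i+2, 4i+3` (as `vᵢ, vᵢ', wᵢ, wᵢ'`, with `wᵢwᵢ'` the non-edge),
the last block is a triangle `v_k, v_k', w_k` on `4(k-1), 4(k-1)+1, 4(k-1)+2`, and
consecutive blocks are joined by the edges `wᵢv_{i+1}` and `wᵢ'v_{i+1}'`. -/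
def BstarRel (k : ℕ) (a b : ℕ) : Prop :=
  (∃ i, i + 1 < k ∧
    ((a, b) = (4*i, 4*i+1) ∨ (a, b) = (4*i, 4*i+2) ∨ (a, b) = (4*i, 4*i+3) ∨
     (a, b) = (4*i+1, 4*i+2) ∨ (a, b) = (4*i+1, 4*i+3))) ∨
  ((a, b) = (4*(k-1), 4*(k-1)+1) ∨ (a, b) = (4*(k-1), 4*(k-1)+2) ∨
   (a, b) = (4*(k-1)+1, 4*(k-1)+2)) ∨
  (∃ i, i + 1 < k ∧ ((a, b) = (4*i+2, 4*(i+1)) ∨ (a, b) = (4*i+3, 4*(i+1)+1)))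

/-- The graph `B_k^*` on `4k-1` vertices. -/
def Bstar (k : ℕ) : SimpleGraph (Fin (4*k-1)) :=
  SimpleGraph.fromRel (fun a b => BstarRel k a.val b.val)


def adjN (a b : ℕ) : Prop :=
  (b = a+1 ∧ a%4 ≤ 1) ∨ b = a+2 ∨ (b = a+3 ∧ a%4 = 0) ∨
  (a = b+1 ∧ b%4 ≤ 1) ∨ a = b+2 ∨ (a = b+3 ∧ b%4 = 0)

lemma adj_phi {a b : ℕ} (h : adjN a b) : a/2 ≤ b/2 + 1 ∧ b/2 ≤ a/2 + 1 ∧ a ≠ b := by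
  unfold adjN at h; omega

set_option maxHeartbeats 1600000 in
lemma core (a0 a1 a2 a3 a4 a5 : ℕ)
    (d01 : a0 ≠ a1) (d02 : a0 ≠ a2) (d03 : a0 ≠ a3) (d04 : a0 ≠ a4) (d05 : a0 ≠ a5)
    (d12 : a1 ≠ a2) (d13 : a1 ≠ a3) (d14 : a1 ≠ a4) (d15 : a1 ≠ a5)
    (d23 : a2 ≠ a3) (d24 : a2 ≠ a4) (d25 : a2 ≠ a5)
    (d34 : a3 ≠ a4) (d35 : a3 ≠ a5) (d45 : a4 ≠ a5)
    (e01 : adjN a0 a1) (e12 : adjN a1 a2) (e23 : adjN a2 a3)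
    (e34 : adjN a3 a4) (e45 : adjN a4 a5) (e50 : adjN a5 a0)
    (n02 : ¬ adjN a0 a2) (n03 : ¬ adjN a0 a3) (n04 : ¬ adjN a0 a4)
    (n13 : ¬ adjN a1 a3) (n14 : ¬ adjN a1 a4) (n15 : ¬ adjN a1 a5)
    (n24 : ¬ adjN a2 a4) (n25 : ¬ adjN a2 a5) (n35 : ¬ adjN a3 a5)
    (m1 : a1/2 ≤ a0/2) (m2 : a2/2 ≤ a0/2) (m3 : a3/2 ≤ a0/2)
    (m4 : a4/2 ≤ a0/2) (m5 : a5/2 ≤ a0/2) : False := by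
  obtain ⟨p01, q01, -⟩ := adj_phi e01
  obtain ⟨p12, q12, -⟩ := adj_phi e12
  obtain ⟨p45, q45, -⟩ := adj_phi e45
  obtain ⟨p50, q50, -⟩ := adj_phi e50
  by_cases h1 : a1/2 = a0/2 <;> by_cases h5 : a5/2 = a0/2
  · -- case A: a0 a1 a5 distinct, same fiber
    clear e01 e12 e23 e34 e45 e50 n02 n03 n04 n13 n14 n15 n24 n25 n35
    omega
  · -- case B1: fiber M = {a0,a1}
    have ha5 : a5/2 + 1 = a0/2 := by clear e01 e12 e23 e34 e45 e50 n02 n03 n04 n13 n14 n15 n24 n25 n35; omega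
    have ha2 : a2/2 + 1 = a0/2 := by clear e01 e12 e23 e34 e45 e50 n02 n03 n04 n13 n14 n15 n24 n25 n35; omega
    have ha4 : a4/2 + 2 = a0/2 := by clear e01 e12 e23 e34 e45 e50 n02 n03 n04 n13 n14 n15 n24 n25 n35; omega
    apply n24
    clear e12 e23 e34 e45 e50 n02 n03 n04 n13 n14 n15 n25 n35 n24
    unfold adjN at e01 ⊢
    omega
  · -- case B2: fiber M = {a0,a5}
    have ha1 : a1/2 + 1 = a0/2 := by clear e01 e12 e23 e34 e45 e50 n02 n03 n04 n13 n14 n15 n24 n25 n35; omega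
    have ha4 : a4/2 + 1 = a0/2 := by clear e01 e12 e23 e34 e45 e50 n02 n03 n04 n13 n14 n15 n24 n25 n35; omega
    have ha2 : a2/2 + 2 = a0/2 := by clear e01 e12 e23 e34 e45 e50 n02 n03 n04 n13 n14 n15 n24 n25 n35; omega
    apply n24
    clear e01 e12 e23 e34 e45 n02 n03 n04 n13 n14 n15 n25 n35 n24
    unfold adjN at e50 ⊢
    omega
  · -- case C
    have ha1 : a1/2 + 1 = a0/2 := by clear e01 e12 e23 e34 e45 e50 n02 n03 n04 n13 n14 n15 n24 n25 n35; omega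
    have ha5 : a5/2 + 1 = a0/2 := by clear e01 e12 e23 e34 e45 e50 n02 n03 n04 n13 n14 n15 n24 n25 n35; omega
    clear e12 e23 e34 e45 n02 n03 n04 n13 n14 n24 n25 n35
    unfold adjN at e01 e50 n15
    rcases e01 with h|h|h|h|h|h <;> rcases e50 with g|g|g|g|g|g <;> omega

lemma rel_lt {k a b : ℕ} (h : BstarRel k a b) : a < b := by
  unfold BstarRel at h
  simp only [Prod.mk.injEq] at h
  rcases h with ⟨i,hi,h⟩|h|⟨i,hi,h⟩ <;> omega

lemma rel_char {k a b : ℕ} (hk : 1 ≤ k) (hb : b < 4*k-1) (hab : a < b) :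
    BstarRel k a b ↔ ((b = a+1 ∧ a%4 ≤ 1) ∨ b = a+2 ∨ (b = a+3 ∧ a%4 = 0)) := by
  unfold BstarRel
  simp only [Prod.mk.injEq]
  constructor
  · rintro (⟨i,hi,h⟩|h|⟨i,hi,h⟩) <;> omega
  · intro hE
    rcases hE with h|h|h <;> by_cases hl : a/4 + 1 < k <;> by_cases hm : a % 4 ≤ 1 <;>
      first
      | exact Or.inl ⟨a/4, by omega, by omega⟩
      | exact Or.inr (Or.inr ⟨a/4, by omega, by omega⟩)
      | exact Or.inr (Or.inl (by omega))

lemma adj_iff {k : ℕ} (hk : 1 ≤ k) (x y : Fin (4*k-1)) :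
    (Bstar k).Adj x y ↔ adjN x.val y.val := by
  show (SimpleGraph.fromRel _).Adj x y ↔ _
  rw [SimpleGraph.fromRel_adj]
  constructor
  · rintro ⟨hne, h|h⟩
    · have hlt := rel_lt h
      rw [rel_char hk y.isLt hlt] at h
      unfold adjN; tauto
    · have hlt := rel_lt h
      rw [rel_char hk x.isLt hlt] at h
      unfold adjN; tauto
  · intro h
    have hxy : x.val ≠ y.val := by unfold adjN at h; omega
    refine ⟨fun he => hxy (by rw [he]), ?_⟩
    unfold adjN at h
    rcases Nat.lt_or_ge x.val y.val with hlt|hge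
    · exact Or.inl ((rel_char hk y.isLt hlt).2 (by omega))
    · have hlt : y.val < x.val := by omega
      exact Or.inr ((rel_char hk x.isLt hlt).2 (by omega))

set_option maxHeartbeats 1600000 in
theorem stmt_5 (k : ℕ) (hk : 1 ≤ k) : ¬ HasInducedC6 (Bstar k) := by
  rintro ⟨f, hf⟩
  set n : Fin 6 → ℕ := fun j => (f j).val with hn
  have hinj : ∀ i j : Fin 6, i ≠ j → n i ≠ n j := fun i j hij h =>
    hij (f.injective (Fin.val_injective h))
  have edge : ∀ i j : Fin 6, (SimpleGraph.cycleGraph 6).Adj i j → adjN (n i) (n j) :=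
    fun i j h => (adj_iff hk (f i) (f j)).1 ((hf i j).2 h)
  have nonedge : ∀ i j : Fin 6, ¬ (SimpleGraph.cycleGraph 6).Adj i j → ¬ adjN (n i) (n j) :=
    fun i j h hh => h ((hf i j).1 ((adj_iff hk (f i) (f j)).2 hh))
  obtain ⟨j, hj⟩ := Finite.exists_max (fun i => n i / 2)
  fin_cases j
  · exact core (n 0) (n 1) (n 2) (n 3) (n 4) (n 5)
      (hinj 0 1 (by decide)) (hinj 0 2 (by decide)) (hinj 0 3 (by decide)) (hinj 0 4 (by decide)) (hinj 0 5 (by decide)) (hinj 1 2 (by decide)) (hinj 1 3 (by decide)) (hinj 1 4 (by decide)) (hinj 1 5 (by decide)) (hinj 2 3 (by decide)) (hinj 2 4 (by decide)) (hinj 2 5 (by decide)) (hinj 3 4 (by decide)) (hinj 3 5 (by decide)) (hinj 4 5 (by decide))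
      (edge 0 1 (by decide)) (edge 1 2 (by decide)) (edge 2 3 (by decide)) (edge 3 4 (by decide)) (edge 4 5 (by decide)) (edge 5 0 (by decide))
      (nonedge 0 2 (by decide)) (nonedge 0 3 (by decide)) (nonedge 0 4 (by decide)) (nonedge 1 3 (by decide)) (nonedge 1 4 (by decide)) (nonedge 1 5 (by decide)) (nonedge 2 4 (by decide)) (nonedge 2 5 (by decide)) (nonedge 3 5 (by decide))
      (hj 1) (hj 2) (hj 3) (hj 4) (hj 5)
  · exact core (n 1) (n 2) (n 3) (n 4) (n 5) (n 0)
      (hinj 1 2 (by decide)) (hinj 1 3 (by decide)) (hinj 1 4 (by decide)) (hinj 1 5 (by decide)) (hinj 1 0 (by decide)) (hinj 2 3 (by decide)) (hinj 2 4 (by decide)) (hinj 2 5 (by decide)) (hinj 2 0 (by decide)) (hinj 3 4 (by decide)) (hinj 3 5 (by decide)) (hinj 3 0 (by decide)) (hinj 4 5 (by decide)) (hinj 4 0 (by decide)) (hinj 5 0 (by decide))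
      (edge 1 2 (by decide)) (edge 2 3 (by decide)) (edge 3 4 (by decide)) (edge 4 5 (by decide)) (edge 5 0 (by decide)) (edge 0 1 (by decide))
      (nonedge 1 3 (by decide)) (nonedge 1 4 (by decide)) (nonedge 1 5 (by decide)) (nonedge 2 4 (by decide)) (nonedge 2 5 (by decide)) (nonedge 2 0 (by decide)) (nonedge 3 5 (by decide)) (nonedge 3 0 (by decide)) (nonedge 4 0 (by decide))
      (hj 2) (hj 3) (hj 4) (hj 5) (hj 0)
  · exact core (n 2) (n 3) (n 4) (n 5) (n 0) (n 1)
      (hinj 2 3 (by decide)) (hinj 2 4 (by decide)) (hinj 2 5 (by decide)) (hinj 2 0 (by decide)) (hinj 2 1 (by decide)) (hinj 3 4 (by decide)) (hinj 3 5 (by decide)) (hinj 3 0 (by decide)) (hinj 3 1 (by decide)) (hinj 4 5 (by decide)) (hinj 4 0 (by decide)) (hinj 4 1 (by decide)) (hinj 5 0 (by decide)) (hinj 5 1 (by decide)) (hinj 0 1 (by decide))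
      (edge 2 3 (by decide)) (edge 3 4 (by decide)) (edge 4 5 (by decide)) (edge 5 0 (by decide)) (edge 0 1 (by decide)) (edge 1 2 (by decide))
      (nonedge 2 4 (by decide)) (nonedge 2 5 (by decide)) (nonedge 2 0 (by decide)) (nonedge 3 5 (by decide)) (nonedge 3 0 (by decide)) (nonedge 3 1 (by decide)) (nonedge 4 0 (by decide)) (nonedge 4 1 (by decide)) (nonedge 5 1 (by decide))
      (hj 3) (hj 4) (hj 5) (hj 0) (hj 1)
  · exact core (n 3) (n 4) (n 5) (n 0) (n 1) (n 2)
      (hinj 3 4 (by decide)) (hinj 3 5 (by decide)) (hinj 3 0 (by decide)) (hinj 3 1 (by decide)) (hinj 3 2 (by decide)) (hinj 4 5 (by decide)) (hinj 4 0 (by decide)) (hinj 4 1 (by decide)) (hinj 4 2 (by decide)) (hinj 5 0 (by decide)) (hinj 5 1 (by decide)) (hinj 5 2 (by decide)) (hinj 0 1 (by decide)) (hinj 0 2 (by decide)) (hinj 1 2 (by decide))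
      (edge 3 4 (by decide)) (edge 4 5 (by decide)) (edge 5 0 (by decide)) (edge 0 1 (by decide)) (edge 1 2 (by decide)) (edge 2 3 (by decide))
      (nonedge 3 5 (by decide)) (nonedge 3 0 (by decide)) (nonedge 3 1 (by decide)) (nonedge 4 0 (by decide)) (nonedge 4 1 (by decide)) (nonedge 4 2 (by decide)) (nonedge 5 1 (by decide)) (nonedge 5 2 (by decide)) (nonedge 0 2 (by decide))
      (hj 4) (hj 5) (hj 0) (hj 1) (hj 2)
  · exact core (n 4) (n 5) (n 0) (n 1) (n 2) (n 3)
      (hinj 4 5 (by decide)) (hinj 4 0 (by decide)) (hinj 4 1 (by decide)) (hinj 4 2 (by decide)) (hinj 4 3 (by decide)) (hinj 5 0 (by decide)) (hinj 5 1 (by decide)) (hinj 5 2 (by decide)) (hinj 5 3 (by decide)) (hinj 0 1 (by decide)) (hinj 0 2 (by decide)) (hinj 0 3 (by decide)) (hinj 1 2 (by decide)) (hinj 1 3 (by decide)) (hinj 2 3 (by decide))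
      (edge 4 5 (by decide)) (edge 5 0 (by decide)) (edge 0 1 (by decide)) (edge 1 2 (by decide)) (edge 2 3 (by decide)) (edge 3 4 (by decide))
      (nonedge 4 0 (by decide)) (nonedge 4 1 (by decide)) (nonedge 4 2 (by decide)) (nonedge 5 1 (by decide)) (nonedge 5 2 (by decide)) (nonedge 5 3 (by decide)) (nonedge 0 2 (by decide)) (nonedge 0 3 (by decide)) (nonedge 1 3 (by decide))
      (hj 5) (hj 0) (hj 1) (hj 2) (hj 3)
  · exact core (n 5) (n 0) (n 1) (n 2) (n 3) (n 4)
      (hinj 5 0 (by decide)) (hinj 5 1 (by decide)) (hinj 5 2 (by decide)) (hinj 5 3 (by decide)) (hinj 5 4 (by decide)) (hinj 0 1 (by decide)) (hinj 0 2 (by decide)) (hinj 0 3 (by decide)) (hinj 0 4 (by decide)) (hinj 1 2 (by decide)) (hinj 1 3 (by decide)) (hinj 1 4 (by decide)) (hinj 2 3 (by decide)) (hinj 2 4 (by decide)) (hinj 3 4 (by decide))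
      (edge 5 0 (by decide)) (edge 0 1 (by decide)) (edge 1 2 (by decide)) (edge 2 3 (by decide)) (edge 3 4 (by decide)) (edge 4 5 (by decide))
      (nonedge 5 1 (by decide)) (nonedge 5 2 (by decide)) (nonedge 5 3 (by decide)) (nonedge 0 2 (by decide)) (nonedge 0 3 (by decide)) (nonedge 0 4 (by decide)) (nonedge 1 3 (by decide)) (nonedge 1 4 (by decide)) (nonedge 2 4 (by decide))
      (hj 0) (hj 1) (hj 2) (hj 3) (hj 4)
end

section
/- For every k ≥ 1, the P_3-isolation number of B_k^* equals k, i.e., ι(B_k^*, P_3) = (|V(B_k^*)|+1)/4. -/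
open SimpleGraph

namespace BstarAux

/-- Value-level adjacency. -/
def AdjV (k p q : ℕ) : Prop := p ≠ q ∧ (BstarRel k p q ∨ BstarRel k q p)

lemma AdjV.symm {k p q : ℕ} (h : AdjV k p q) : AdjV k q p :=
  ⟨Ne.symm h.1, h.2.symm⟩

lemma bstar_adj {k : ℕ} (a b : Fin (4*k-1)) :
    (Bstar k).Adj a b ↔ AdjV k a.val b.val := by
  simp [Bstar, SimpleGraph.fromRel_adj, AdjV, ne_eq, Fin.ext_iff]

/-- `m` is the value of a vertex of `D`. -/
def Dm (k : ℕ) (D : Set (Fin (4*k-1))) (m : ℕ) : Prop :=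
  ∃ d ∈ D, (d : Fin (4*k-1)).val = m

/-- `m` is the value of a covered vertex. -/
def Cov (k : ℕ) (D : Set (Fin (4*k-1))) (m : ℕ) : Prop :=
  ∃ x, x ∈ closedNbhd (Bstar k) D ∧ (x : Fin (4*k-1)).val = m

variable {k : ℕ} {D : Set (Fin (4*k-1))}

lemma Dm.lt {m : ℕ} (h : Dm k D m) : m < 4*k-1 := by
  obtain ⟨d, _, hd⟩ := h; exact hd ▸ d.isLt

lemma Dm.cov {m : ℕ} (h : Dm k D m) : Cov k D m := by
  obtain ⟨d, hd, hv⟩ := h; exact ⟨d, Or.inl hd, hv⟩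

lemma not_cov {m : ℕ} (h1 : ¬ Dm k D m) (h2 : ∀ p, Dm k D p → ¬ AdjV k p m) :
    ¬ Cov k D m := by
  rintro ⟨x, hx, rfl⟩
  rcases hx with hx | ⟨d, hd, hadj⟩
  · exact h1 ⟨x, hx, rfl⟩
  · exact h2 d.val ⟨d, hd, rfl⟩ ((bstar_adj d x).1 hadj)

lemma p3_false (hD : IsP3IsolatingSet (Bstar k) D) {a b c : ℕ}
    (ha : a < 4*k-1) (hb : b < 4*k-1) (hc : c < 4*k-1)
    (hab : AdjV k a b) (hbc : AdjV k b c) (hac : a ≠ c)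
    (na : ¬ Cov k D a) (nb : ¬ Cov k D b) (nc : ¬ Cov k D c) : False := by
  apply hD
  have ma : (⟨a, ha⟩ : Fin (4*k-1)) ∈ (closedNbhd (Bstar k) D)ᶜ :=
    fun h => na ⟨_, h, rfl⟩
  have mb : (⟨b, hb⟩ : Fin (4*k-1)) ∈ (closedNbhd (Bstar k) D)ᶜ :=
    fun h => nb ⟨_, h, rfl⟩
  have mc : (⟨c, hc⟩ : Fin (4*k-1)) ∈ (closedNbhd (Bstar k) D)ᶜ :=
    fun h => nc ⟨_, h, rfl⟩
  refine ⟨⟨![⟨⟨a, ha⟩, ma⟩, ⟨⟨b, hb⟩, mb⟩, ⟨⟨c, hc⟩, mc⟩], ?_⟩, ?_⟩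
  · intro x y hxy
    fin_cases x <;> fin_cases y <;>
      simp_all [Subtype.ext_iff, Fin.ext_iff] <;>
      first
        | rfl
        | exact absurd rfl hab.1
        | exact absurd rfl hbc.1
        | exact absurd rfl hac
        | (exact absurd rfl (Ne.symm hab.1))
        | (exact absurd rfl (Ne.symm hbc.1))
        | (exact absurd rfl (Ne.symm hac))
  · intro x y hxy
    rw [SimpleGraph.pathGraph_adj] at hxy
    fin_cases x <;> fin_cases y <;> simp_all [SimpleGraph.comap_adj, bstar_adj] <;>
      first
        | exact hab
        | exact hab.symm
        | exact hbc
        | exact hbc.symm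


section Nbrs

variable {k : ℕ}

lemma adj_vv' {i : ℕ} (h : i < k) : AdjV k (4*i) (4*i+1) := by
  refine ⟨by omega, Or.inl ?_⟩
  by_cases h2 : i + 1 < k
  · exact Or.inl ⟨i, h2, Or.inl rfl⟩
  · have : i = k - 1 := by omega
    subst this; exact Or.inr (Or.inl (Or.inl rfl))

lemma adj_vw {i : ℕ} (h : i < k) : AdjV k (4*i) (4*i+2) := by
  refine ⟨by omega, Or.inl ?_⟩
  by_cases h2 : i + 1 < k
  · exact Or.inl ⟨i, h2, Or.inr (Or.inl rfl)⟩
  · have : i = k - 1 := by omega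
    subst this; exact Or.inr (Or.inl (Or.inr (Or.inl rfl)))

lemma adj_v'w {i : ℕ} (h : i < k) : AdjV k (4*i+1) (4*i+2) := by
  refine ⟨by omega, Or.inl ?_⟩
  by_cases h2 : i + 1 < k
  · exact Or.inl ⟨i, h2, Or.inr (Or.inr (Or.inr (Or.inl rfl)))⟩
  · have : i = k - 1 := by omega
    subst this; exact Or.inr (Or.inl (Or.inr (Or.inr rfl)))

lemma adj_vw' {i : ℕ} (h : i + 1 < k) : AdjV k (4*i) (4*i+3) :=
  ⟨by omega, Or.inl (Or.inl ⟨i, h, Or.inr (Or.inr (Or.inl rfl))⟩)⟩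

lemma adj_v'w' {i : ℕ} (h : i + 1 < k) : AdjV k (4*i+1) (4*i+3) :=
  ⟨by omega, Or.inl (Or.inl ⟨i, h, Or.inr (Or.inr (Or.inr (Or.inr rfl)))⟩)⟩

lemma adj_wv {i : ℕ} (h : i + 1 < k) : AdjV k (4*i+2) (4*(i+1)) :=
  ⟨by omega, Or.inl (Or.inr (Or.inr ⟨i, h, Or.inl rfl⟩))⟩

lemma adj_w'v' {i : ℕ} (h : i + 1 < k) : AdjV k (4*i+3) (4*(i+1)+1) :=
  ⟨by omega, Or.inl (Or.inr (Or.inr ⟨i, h, Or.inr rfl⟩))⟩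

lemma nbrs_v {i p q : ℕ} (hq : q = 4*i) (h : AdjV k p q) :
    p = 4*i+1 ∨ p = 4*i+2 ∨ (i+1 < k ∧ p = 4*i+3) ∨ (1 ≤ i ∧ p = 4*(i-1)+2) := by
  subst hq
  obtain ⟨hne, h | h⟩ := h <;>
    rcases h with ⟨j, hj, h⟩ | h | ⟨j, hj, h⟩ <;>
    simp only [Prod.mk.injEq] at h <;> omega

lemma nbrs_v' {i p q : ℕ} (hq : q = 4*i+1) (h : AdjV k p q) :
    p = 4*i ∨ p = 4*i+2 ∨ (i+1 < k ∧ p = 4*i+3) ∨ (1 ≤ i ∧ p = 4*(i-1)+3) := by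
  subst hq
  obtain ⟨hne, h | h⟩ := h <;>
    rcases h with ⟨j, hj, h⟩ | h | ⟨j, hj, h⟩ <;>
    simp only [Prod.mk.injEq] at h <;> omega

lemma nbrs_w {i p q : ℕ} (hq : q = 4*i+2) (h : AdjV k p q) :
    p = 4*i ∨ p = 4*i+1 ∨ (i+1 < k ∧ p = 4*(i+1)) := by
  subst hq
  obtain ⟨hne, h | h⟩ := h <;>
    rcases h with ⟨j, hj, h⟩ | h | ⟨j, hj, h⟩ <;>
    simp only [Prod.mk.injEq] at h <;> omega

lemma nbrs_w' {i p q : ℕ} (hq : q = 4*i+3) (hi : i + 1 < k) (h : AdjV k p q) :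
    p = 4*i ∨ p = 4*i+1 ∨ p = 4*(i+1)+1 := by
  subst hq
  obtain ⟨hne, h | h⟩ := h <;>
    rcases h with ⟨j, hj, h⟩ | h | ⟨j, hj, h⟩ <;>
    simp only [Prod.mk.injEq] at h <;> omega

end Nbrs

section Blocks

variable {k : ℕ} {D : Set (Fin (4*k-1))}

/-- Block `i` contains no vertex of `D`. -/
def Emp (k : ℕ) (D : Set (Fin (4*k-1))) (i : ℕ) : Prop :=
  ∀ m, 4*i ≤ m → m < 4*i + 4 → ¬ Dm k D m

lemma not_cov' {m : ℕ} (h1 : ¬ Dm k D m)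
    (h2 : ∀ p, AdjV k p m → Dm k D p → False) : ¬ Cov k D m :=
  not_cov h1 (fun p hp ha => h2 p ha hp)

lemma blockB0 (hD : IsP3IsolatingSet (Bstar k) D) (hk : 1 ≤ k) (he : Emp k D 0) :
    1 < k ∧ Dm k D 4 ∧ Dm k D 5 := by
  have hk2 : 1 < k := by
    by_contra hk2
    have hk1 : k = 1 := by omega
    have u0 : ¬ Cov k D 0 := by
      refine not_cov' (he _ (by omega) (by omega)) ?_
      intro p hadj hp
      rcases nbrs_v (i := 0) (by omega) hadj with h | h | ⟨h1, h⟩ | ⟨h1, h⟩ <;>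
        exact he p (by omega) (by omega) hp
    have u1 : ¬ Cov k D 1 := by
      refine not_cov' (he _ (by omega) (by omega)) ?_
      intro p hadj hp
      rcases nbrs_v' (i := 0) (by omega) hadj with h | h | ⟨h1, h⟩ | ⟨h1, h⟩ <;>
        exact he p (by omega) (by omega) hp
    have u2 : ¬ Cov k D 2 := by
      refine not_cov' (he _ (by omega) (by omega)) ?_
      intro p hadj hp
      rcases nbrs_w (i := 0) (by omega) hadj with h | h | ⟨h1, h⟩ <;>
        first
          | exact he p (by omega) (by omega) hp
          | omega
    exact p3_false hD (a := 0) (b := 1) (c := 2) (by omega) (by omega) (by omega)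
      (adj_vv' (i := 0) (by omega)) (adj_v'w (i := 0) (by omega)) (by omega) u0 u1 u2
  refine ⟨hk2, ?_, ?_⟩
  · by_contra hR
    have u0 : ¬ Cov k D 0 := by
      refine not_cov' (he _ (by omega) (by omega)) ?_
      intro p hadj hp
      rcases nbrs_v (i := 0) (by omega) hadj with h | h | ⟨h1, h⟩ | ⟨h1, h⟩ <;>
        exact he p (by omega) (by omega) hp
    have u1 : ¬ Cov k D 1 := by
      refine not_cov' (he _ (by omega) (by omega)) ?_
      intro p hadj hp
      rcases nbrs_v' (i := 0) (by omega) hadj with h | h | ⟨h1, h⟩ | ⟨h1, h⟩ <;>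
        exact he p (by omega) (by omega) hp
    have u2 : ¬ Cov k D 2 := by
      refine not_cov' (he _ (by omega) (by omega)) ?_
      intro p hadj hp
      rcases nbrs_w (i := 0) (by omega) hadj with h | h | ⟨h1, h⟩
      · exact he p (by omega) (by omega) hp
      · exact he p (by omega) (by omega) hp
      · exact hR ((show p = 4 by omega) ▸ hp)
    exact p3_false hD (a := 0) (b := 1) (c := 2) (by omega) (by omega) (by omega)
      (adj_vv' (i := 0) (by omega)) (adj_v'w (i := 0) (by omega)) (by omega) u0 u1 u2
  · by_contra hR
    have u0 : ¬ Cov k D 0 := by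
      refine not_cov' (he _ (by omega) (by omega)) ?_
      intro p hadj hp
      rcases nbrs_v (i := 0) (by omega) hadj with h | h | ⟨h1, h⟩ | ⟨h1, h⟩ <;>
        exact he p (by omega) (by omega) hp
    have u1 : ¬ Cov k D 1 := by
      refine not_cov' (he _ (by omega) (by omega)) ?_
      intro p hadj hp
      rcases nbrs_v' (i := 0) (by omega) hadj with h | h | ⟨h1, h⟩ | ⟨h1, h⟩ <;>
        exact he p (by omega) (by omega) hp
    have u3 : ¬ Cov k D 3 := by
      refine not_cov' (he _ (by omega) (by omega)) ?_
      intro p hadj hp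
      rcases nbrs_w' (i := 0) (by omega) (by omega) hadj with h | h | h
      · exact he p (by omega) (by omega) hp
      · exact he p (by omega) (by omega) hp
      · exact hR ((show p = 5 by omega) ▸ hp)
    exact p3_false hD (a := 3) (b := 0) (c := 1) (by omega) (by omega) (by omega)
      ((adj_vw' (i := 0) (by omega)).symm) (adj_vv' (i := 0) (by omega)) (by omega) u3 u0 u1
end Blocks


section Bstep

variable {k : ℕ} {D : Set (Fin (4*k-1))} {j : ℕ}

lemma uncov_v (he : Emp k D (j+1)) (hL : ¬ Dm k D (4*j+2)) :
    ¬ Cov k D (4*(j+1)) := by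
  refine not_cov' (he _ (by omega) (by omega)) ?_
  intro p hadj hp
  rcases nbrs_v (i := j+1) rfl hadj with h | h | ⟨h1, h⟩ | ⟨h1, h⟩
  · exact he p (by omega) (by omega) hp
  · exact he p (by omega) (by omega) hp
  · exact he p (by omega) (by omega) hp
  · exact hL ((show p = 4*j+2 by omega) ▸ hp)

lemma uncov_v' (he : Emp k D (j+1)) (hL' : ¬ Dm k D (4*j+3)) :
    ¬ Cov k D (4*(j+1)+1) := by
  refine not_cov' (he _ (by omega) (by omega)) ?_
  intro p hadj hp
  rcases nbrs_v' (i := j+1) rfl hadj with h | h | ⟨h1, h⟩ | ⟨h1, h⟩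
  · exact he p (by omega) (by omega) hp
  · exact he p (by omega) (by omega) hp
  · exact he p (by omega) (by omega) hp
  · exact hL' ((show p = 4*j+3 by omega) ▸ hp)

lemma uncov_w (he : Emp k D (j+1)) (hR : j+2 < k → ¬ Dm k D (4*(j+2))) :
    ¬ Cov k D (4*(j+1)+2) := by
  refine not_cov' (he _ (by omega) (by omega)) ?_
  intro p hadj hp
  rcases nbrs_w (i := j+1) rfl hadj with h | h | ⟨h1, h⟩
  · exact he p (by omega) (by omega) hp
  · exact he p (by omega) (by omega) hp
  · exact hR (by omega) ((show p = 4*(j+2) by omega) ▸ hp)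

lemma uncov_w' (he : Emp k D (j+1)) (hk2 : j+2 < k) (hR' : ¬ Dm k D (4*(j+2)+1)) :
    ¬ Cov k D (4*(j+1)+3) := by
  refine not_cov' (he _ (by omega) (by omega)) ?_
  intro p hadj hp
  rcases nbrs_w' (i := j+1) rfl (by omega) hadj with h | h | h
  · exact he p (by omega) (by omega) hp
  · exact he p (by omega) (by omega) hp
  · exact hR' ((show p = 4*(j+2)+1 by omega) ▸ hp)

lemma uncov_lw (hj : j+1 < k) (he : Emp k D (j+1))
    (hv : ¬ Dm k D (4*j)) (hv' : ¬ Dm k D (4*j+1)) (hw : ¬ Dm k D (4*j+2)) :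
    ¬ Cov k D (4*j+2) := by
  refine not_cov' hw ?_
  intro p hadj hp
  rcases nbrs_w (i := j) rfl hadj with h | h | ⟨h1, h⟩
  · exact hv ((show p = 4*j by omega) ▸ hp)
  · exact hv' ((show p = 4*j+1 by omega) ▸ hp)
  · exact he p (by omega) (by omega) hp

lemma uncov_lw' (hj : j+1 < k) (he : Emp k D (j+1))
    (hv : ¬ Dm k D (4*j)) (hv' : ¬ Dm k D (4*j+1)) (hw' : ¬ Dm k D (4*j+3)) :
    ¬ Cov k D (4*j+3) := by
  refine not_cov' hw' ?_
  intro p hadj hp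
  rcases nbrs_w' (i := j) rfl hj hadj with h | h | h
  · exact hv ((show p = 4*j by omega) ▸ hp)
  · exact hv' ((show p = 4*j+1 by omega) ▸ hp)
  · exact he p (by omega) (by omega) hp

lemma blockBstep (hD : IsP3IsolatingSet (Bstar k) D) (hj : j+1 < k)
    (he : Emp k D (j+1)) :
    (Dm k D (4*j+2) ∧ Dm k D (4*j+3)) ∨
    (Dm k D (4*(j+2)) ∧ Dm k D (4*(j+2)+1)) ∨
    ((Dm k D (4*j+2) ∨ Dm k D (4*j+3)) ∧ (Dm k D (4*j) ∨ Dm k D (4*j+1))) := by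
  by_contra hcon
  push_neg at hcon
  obtain ⟨h1, h2, h3⟩ := hcon
  rcases Classical.em (Dm k D (4*j+2)) with hL | hL <;>
    rcases Classical.em (Dm k D (4*j+3)) with hL' | hL'
  · exact h1 hL hL'
  · -- left saver is exactly `w_j`
    have hv : ¬ Dm k D (4*j) := (h3 (Or.inl hL)).1
    have hv' : ¬ Dm k D (4*j+1) := (h3 (Or.inl hL)).2
    have u1 := uncov_lw' hj he hv hv' hL'
    have u2 := uncov_v' he hL'
    rcases Classical.em (Dm k D (4*(j+2))) with hR | hR
    · have hR' : ¬ Dm k D (4*(j+2)+1) := fun h => h2 hR h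
      have hk2 : j+2 < k := by have := hR.lt; omega
      have u3 := uncov_w' he hk2 hR'
      exact p3_false hD (a := 4*j+3) (b := 4*(j+1)+1) (c := 4*(j+1)+3)
        (by omega) (by omega) (by omega)
        (adj_w'v' (i := j) hj) (adj_v'w' (i := j+1) hk2) (by omega) u1 u2 u3
    · have u3 := uncov_w he (fun _ => hR)
      exact p3_false hD (a := 4*j+3) (b := 4*(j+1)+1) (c := 4*(j+1)+2)
        (by omega) (by omega) (by omega)
        (adj_w'v' (i := j) hj) (adj_v'w (i := j+1) (by omega)) (by omega) u1 u2 u3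
  · -- left saver is exactly `w_j'`
    have hv : ¬ Dm k D (4*j) := (h3 (Or.inr hL')).1
    have hv' : ¬ Dm k D (4*j+1) := (h3 (Or.inr hL')).2
    have u1 := uncov_lw hj he hv hv' hL
    have u2 := uncov_v he hL
    rcases Classical.em (Dm k D (4*(j+2))) with hR | hR
    · have hR' : ¬ Dm k D (4*(j+2)+1) := fun h => h2 hR h
      have hk2 : j+2 < k := by have := hR.lt; omega
      have u3 := uncov_w' he hk2 hR'
      exact p3_false hD (a := 4*j+2) (b := 4*(j+1)) (c := 4*(j+1)+3)
        (by omega) (by omega) (by omega)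
        (adj_wv (i := j) hj) (adj_vw' (i := j+1) hk2) (by omega) u1 u2 u3
    · have u3 := uncov_w he (fun _ => hR)
      exact p3_false hD (a := 4*j+2) (b := 4*(j+1)) (c := 4*(j+1)+2)
        (by omega) (by omega) (by omega)
        (adj_wv (i := j) hj) (adj_vw (i := j+1) (by omega)) (by omega) u1 u2 u3
  · -- no left saver: both right vertices must be in `D`
    have u1 := uncov_v he hL
    have u2 := uncov_v' he hL'
    rcases Classical.em (Dm k D (4*(j+2))) with hR | hR
    · have hR' : ¬ Dm k D (4*(j+2)+1) := fun h => h2 hR h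
      have hk2 : j+2 < k := by have := hR.lt; omega
      have u3 := uncov_w' he hk2 hR'
      exact p3_false hD (a := 4*(j+1)) (b := 4*(j+1)+1) (c := 4*(j+1)+3)
        (by omega) (by omega) (by omega)
        (adj_vv' (i := j+1) (by omega))
        (adj_v'w' (i := j+1) hk2) (by omega) u1 u2 u3
    · have u3 := uncov_w he (fun _ => hR)
      exact p3_false hD (a := 4*(j+1)) (b := 4*(j+1)+1) (c := 4*(j+1)+2)
        (by omega) (by omega) (by omega)
        (adj_vv' (i := j+1) (by omega))
        (adj_v'w (i := j+1) (by omega)) (by omega) u1 u2 u3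

end Bstep


section Phi

variable {k : ℕ} {D : Set (Fin (4*k-1))}

lemma Dm.congr {a b : ℕ} (h : Dm k D a) (e : a = b) : Dm k D b := e ▸ h

open Classical in
/-- Canonical choice of a `D`-vertex assigned to an empty block `i`. -/
noncomputable def phiB (k : ℕ) (D : Set (Fin (4*k-1))) (i : ℕ) : ℕ :=
  if Dm k D (4*(i-1)+2) ∧ Dm k D (4*(i-1)+3) then 4*(i-1)+2
  else if Dm k D (4*(i+1)) ∧ Dm k D (4*(i+1)+1) then 4*(i+1)
  else if Dm k D (4*(i-1)+2) then 4*(i-1)+2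
  else 4*(i-1)+3

lemma phiB_left {i : ℕ} (h1 : 1 ≤ i) :
    phiB k D (i-1) < 4*i ∨
      (phiB k D (i-1) = 4*i ∧ Dm k D (4*i) ∧ Dm k D (4*i+1)) := by
  unfold phiB; split_ifs with c1 c2 c3
  · left; omega
  · right
    exact ⟨by omega, c2.1.congr (by omega), c2.2.congr (by omega)⟩
  · left; omega
  · left; omega

lemma phiB_right (hD : IsP3IsolatingSet (Bstar k) D) {i : ℕ} (hi1 : i+1 < k)
    (he : Emp k D (i+1)) :
    (phiB k D (i+1) = 4*i+2 ∧ Dm k D (4*i+2) ∧ Dm k D (4*i+3)) ∨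
    (4*i+4 ≤ phiB k D (i+1)) ∨
    ((phiB k D (i+1) = 4*i+2 ∨ phiB k D (i+1) = 4*i+3) ∧
      (Dm k D (4*i) ∨ Dm k D (4*i+1))) := by
  have tri := blockBstep (j := i) hD hi1 he
  unfold phiB; split_ifs with c1 c2 c3
  · exact Or.inl ⟨by omega, c1.1.congr (by omega), c1.2.congr (by omega)⟩
  · exact Or.inr (Or.inl (by omega))
  · refine Or.inr (Or.inr ⟨Or.inl (by omega), ?_⟩)
    rcases tri with h | h | h
    · exact absurd ⟨h.1.congr (by omega), h.2.congr (by omega)⟩ c1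
    · exact absurd ⟨h.1.congr (by omega), h.2.congr (by omega)⟩ c2
    · exact h.2
  · refine Or.inr (Or.inr ⟨Or.inr (by omega), ?_⟩)
    rcases tri with h | h | h
    · exact absurd ⟨h.1.congr (by omega), h.2.congr (by omega)⟩ c1
    · exact absurd ⟨h.1.congr (by omega), h.2.congr (by omega)⟩ c2
    · exact h.2

lemma phiB_mem (hD : IsP3IsolatingSet (Bstar k) D) (hk : 1 ≤ k) {i : ℕ}
    (hi : i < k) (he : Emp k D i) :
    Dm k D (phiB k D i) ∧
      ((1 ≤ i ∧ (phiB k D i = 4*(i-1)+2 ∨ phiB k D i = 4*(i-1)+3)) ∨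
        phiB k D i = 4*(i+1)) := by
  cases i with
  | zero =>
    obtain ⟨hk2, h4, h5⟩ := blockB0 hD hk he
    unfold phiB; split_ifs with c1 c2 c3
    · exact absurd (c1.1.congr (by omega)) (he 2 (by omega) (by omega))
    · exact ⟨c2.1, Or.inr rfl⟩
    · exact absurd (c3.congr (by omega)) (he 2 (by omega) (by omega))
    · exact absurd ⟨h4.congr (by omega), h5.congr (by omega)⟩ c2
  | succ j =>
    have tri := blockBstep (j := j) hD hi he
    unfold phiB; split_ifs with c1 c2 c3
    · exact ⟨c1.1, Or.inl ⟨by omega, Or.inl rfl⟩⟩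
    · exact ⟨c2.1, Or.inr rfl⟩
    · exact ⟨c3, Or.inl ⟨by omega, Or.inl rfl⟩⟩
    · refine ⟨?_, Or.inl ⟨by omega, Or.inr rfl⟩⟩
      rcases tri with h | h | h
      · exact absurd ⟨h.1.congr (by omega), h.2.congr (by omega)⟩ c1
      · exact absurd ⟨h.1.congr (by omega), h.2.congr (by omega)⟩ c2
      · rcases h.1 with h' | h'
        · exact absurd (h'.congr (by omega)) c3
        · exact h'.congr (by omega)

/-- The defining property of the vertex assigned to a non-empty block. -/
def SpProp (k : ℕ) (D : Set (Fin (4*k-1))) (i m : ℕ) : Prop :=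
  Dm k D m ∧ 4*i ≤ m ∧ m < 4*i+4 ∧
    (1 ≤ i → Emp k D (i-1) → m ≠ phiB k D (i-1)) ∧
    (i+1 < k → Emp k D (i+1) → m ≠ phiB k D (i+1))

lemma spareA (hD : IsP3IsolatingSet (Bstar k) D) {i : ℕ} (hi : i < k)
    (hne : ¬ Emp k D i) : ∃ m, SpProp k D i m := by
  simp only [Emp, not_forall] at hne
  obtain ⟨m0, hb1, hb2, hm0⟩ := hne
  rw [not_not] at hm0
  by_cases hLc : 1 ≤ i ∧ Emp k D (i-1)
  · have HL := phiB_left (k := k) (D := D) hLc.1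
    by_cases hRc : i+1 < k ∧ Emp k D (i+1)
    · have HR := phiB_right hD hRc.1 hRc.2
      rcases HL with hl | ⟨hl, hlv, hlv'⟩ <;>
        rcases HR with ⟨hr, hrw, hrw'⟩ | hr | ⟨hr, hrv | hrv⟩
      · exact ⟨4*i+3, hrw', by omega, by omega, fun _ _ => by omega,
          fun _ _ => by omega⟩
      · exact ⟨m0, hm0, by omega, by omega, fun _ _ => by omega,
          fun _ _ => by omega⟩
      · exact ⟨4*i, hrv, by omega, by omega, fun _ _ => by omega,
          fun _ _ => by omega⟩
      · exact ⟨4*i+1, hrv, by omega, by omega, fun _ _ => by omega,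
          fun _ _ => by omega⟩
      · exact ⟨4*i+3, hrw', by omega, by omega, fun _ _ => by omega,
          fun _ _ => by omega⟩
      · exact ⟨4*i+1, hlv', by omega, by omega, fun _ _ => by omega,
          fun _ _ => by omega⟩
      · exact ⟨4*i+1, hlv', by omega, by omega, fun _ _ => by omega,
          fun _ _ => by omega⟩
      · exact ⟨4*i+1, hlv', by omega, by omega, fun _ _ => by omega,
          fun _ _ => by omega⟩
    · have hR : ∀ (h : i+1 < k), ¬ Emp k D (i+1) := fun h he => hRc ⟨h, he⟩
      rcases HL with hl | ⟨hl, hlv, hlv'⟩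
      · exact ⟨m0, hm0, by omega, by omega, fun _ _ => by omega,
          fun h he => absurd he (hR h)⟩
      · exact ⟨4*i+1, hlv', by omega, by omega, fun _ _ => by omega,
          fun h he => absurd he (hR h)⟩
  · have hL : ∀ (h : 1 ≤ i), ¬ Emp k D (i-1) := fun h he => hLc ⟨h, he⟩
    by_cases hRc : i+1 < k ∧ Emp k D (i+1)
    · have HR := phiB_right hD hRc.1 hRc.2
      rcases HR with ⟨hr, hrw, hrw'⟩ | hr | ⟨hr, hrv | hrv⟩
      · exact ⟨4*i+3, hrw', by omega, by omega, fun h he => absurd he (hL h),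
          fun _ _ => by omega⟩
      · exact ⟨m0, hm0, by omega, by omega, fun h he => absurd he (hL h),
          fun _ _ => by omega⟩
      · exact ⟨4*i, hrv, by omega, by omega, fun h he => absurd he (hL h),
          fun _ _ => by omega⟩
      · exact ⟨4*i+1, hrv, by omega, by omega, fun h he => absurd he (hL h),
          fun _ _ => by omega⟩
    · exact ⟨m0, hm0, by omega, by omega, fun h he => absurd he (hL h),
        fun h he => absurd ⟨h, he⟩ hRc⟩

open Classical in
noncomputable def phiA (k : ℕ) (D : Set (Fin (4*k-1))) (i : ℕ) : ℕ :=
  if h : ∃ m, SpProp k D i m then h.choose else 0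

open Classical in
noncomputable def phi (k : ℕ) (D : Set (Fin (4*k-1))) (i : ℕ) : ℕ :=
  if Emp k D i then phiB k D i else phiA k D i

lemma phi_spec (hD : IsP3IsolatingSet (Bstar k) D) (hk : 1 ≤ k) {i : ℕ}
    (hi : i < k) :
    Dm k D (phi k D i) ∧
      ((Emp k D i ∧ phi k D i = phiB k D i ∧
          ((1 ≤ i ∧ (phi k D i = 4*(i-1)+2 ∨ phi k D i = 4*(i-1)+3)) ∨
            phi k D i = 4*(i+1))) ∨
        (¬ Emp k D i ∧ SpProp k D i (phi k D i))) := by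
  unfold phi
  split_ifs with he
  · obtain ⟨h1, h2⟩ := phiB_mem hD hk hi he
    exact ⟨h1, Or.inl ⟨he, rfl, h2⟩⟩
  · have hex : ∃ m, SpProp k D i m := spareA hD hi he
    have : phiA k D i = hex.choose := dif_pos hex
    have hsp : SpProp k D i (phiA k D i) := this ▸ hex.choose_spec
    exact ⟨hsp.1, Or.inr ⟨he, hsp⟩⟩

lemma phi_inj (hD : IsP3IsolatingSet (Bstar k) D) (hk : 1 ≤ k) {i j : ℕ}
    (hi : i < k) (hj : j < k) (hij : i < j) : phi k D i ≠ phi k D j := by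
  intro heq
  obtain ⟨-, si⟩ := phi_spec hD hk hi
  obtain ⟨-, sj⟩ := phi_spec hD hk hj
  rcases si with ⟨hei, hpbi, shi⟩ | ⟨hei, -, hbi1, hbi2, hciL, hciR⟩ <;>
    rcases sj with ⟨hej, hpbj, shj⟩ | ⟨hej, -, hbj1, hbj2, hcjL, hcjR⟩
  · -- both empty
    rcases shi with ⟨h1, h2 | h2⟩ | h2 <;> rcases shj with ⟨g1, g2 | g2⟩ | g2 <;>
      omega
  · -- i empty, j not
    rcases shi with ⟨h1, h2 | h2⟩ | h2
    · omega
    · omega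
    · -- phi i = 4*(i+1); must have j = i+1
      have hji : j = i + 1 := by omega
      have : Emp k D (j-1) := by
        have : j - 1 = i := by omega
        rw [this]; exact hei
      have hne := hcjL (by omega) this
      have : phiB k D (j-1) = phiB k D i := by
        have e : j - 1 = i := by omega
        rw [e]
      rw [this, ← hpbi] at hne
      exact hne heq.symm
  · -- j empty, i not
    rcases shj with ⟨h1, h2 | h2⟩ | h2
    · -- phi j = 4*(j-1)+2 ; need j-1 = i
      by_cases hji : j = i + 1
      · have : Emp k D (i+1) := by rw [← hji]; exact hej
        have hne := hciR (by omega) this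
        have : phiB k D (i+1) = phiB k D j := by rw [hji]
        rw [this, ← hpbj] at hne
        exact hne heq
      · omega
    · by_cases hji : j = i + 1
      · have : Emp k D (i+1) := by rw [← hji]; exact hej
        have hne := hciR (by omega) this
        have : phiB k D (i+1) = phiB k D j := by rw [hji]
        rw [this, ← hpbj] at hne
        exact hne heq
      · omega
    · omega
  · -- both non-empty
    omega

end Phi


section Final

variable {k : ℕ} {D : Set (Fin (4*k-1))}

lemma lower_bound (hD : IsP3IsolatingSet (Bstar k) D) (hk : 1 ≤ k) :
    k ≤ D.ncard := by
  classical
  -- build an injective map `Fin k → D`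
  have hmem : ∀ i : Fin k, Dm k D (phi k D i.val) :=
    fun i => (phi_spec hD hk i.isLt).1
  let f : Fin k → Fin (4*k-1) := fun i => ⟨phi k D i.val, (hmem i).lt⟩
  have hfD : ∀ i, f i ∈ D := by
    intro i
    obtain ⟨d, hd, hv⟩ := hmem i
    have : f i = d := by
      apply Fin.ext; simp [f, hv]
    rw [this]; exact hd
  have hfinj : Function.Injective f := by
    intro a b hab
    by_contra hne
    have hv : phi k D a.val = phi k D b.val := by
      simpa [f, Fin.ext_iff] using hab
    rcases lt_or_gt_of_ne (fun h : a.val = b.val => hne (Fin.ext h)) with h | h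
    · exact phi_inj hD hk a.isLt b.isLt h hv
    · exact phi_inj hD hk b.isLt a.isLt h hv.symm
  have h1 : (Finset.univ.image f).card = k := by
    rw [Finset.card_image_of_injective _ hfinj, Finset.card_univ, Fintype.card_fin]
  have h2 : (Finset.univ.image f) ⊆ D.toFinset := by
    intro x hx
    obtain ⟨i, -, rfl⟩ := Finset.mem_image.1 hx
    simpa using hfD i
  calc k = (Finset.univ.image f).card := h1.symm
    _ ≤ D.toFinset.card := Finset.card_le_card h2
    _ = D.ncard := (Set.ncard_eq_toFinset_card' D).symm

/-- The isolating set consisting of all vertices `vᵢ = 4i`. -/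
def D0 (k : ℕ) : Set (Fin (4*k-1)) :=
  Set.range (fun i : Fin k => (⟨4*i.val, by have := i.isLt; omega⟩ : Fin (4*k-1)))

lemma D0_cov (hk : 1 ≤ k) (x : Fin (4*k-1)) :
    x ∈ closedNbhd (Bstar k) (D0 k) := by
  set q := x.val / 4 with hq
  have hx4 : x.val = 4*q + x.val % 4 := by omega
  have hqk : q < k := by have := x.isLt; omega
  have hdm : (⟨4*q, by have := x.isLt; omega⟩ : Fin (4*k-1)) ∈ D0 k :=
    ⟨⟨q, hqk⟩, rfl⟩
  have hr : x.val % 4 = 0 ∨ x.val % 4 = 1 ∨ x.val % 4 = 2 ∨ x.val % 4 = 3 := by omega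
  rcases hr with h | h | h | h
  · apply Set.mem_union_left
    have : x = (⟨4*q, by have := x.isLt; omega⟩ : Fin (4*k-1)) :=
      Fin.ext (by simp only [Fin.val_mk]; omega)
    rw [this]; exact hdm
  · apply Set.mem_union_right
    refine ⟨_, hdm, (bstar_adj _ _).2 ?_⟩
    show AdjV k (4*q) x.val
    rw [show (x.val : ℕ) = 4*q+1 from by omega]
    exact adj_vv' (i := q) hqk
  · apply Set.mem_union_right
    refine ⟨_, hdm, (bstar_adj _ _).2 ?_⟩
    show AdjV k (4*q) x.val
    rw [show (x.val : ℕ) = 4*q+2 from by omega]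
    exact adj_vw (i := q) hqk
  · apply Set.mem_union_right
    refine ⟨_, hdm, (bstar_adj _ _).2 ?_⟩
    have hq1 : q + 1 < k := by have := x.isLt; omega
    show AdjV k (4*q) x.val
    rw [show (x.val : ℕ) = 4*q+3 from by omega]
    exact adj_vw' (i := q) hq1

lemma D0_isolating (hk : 1 ≤ k) : IsP3IsolatingSet (Bstar k) (D0 k) := by
  rintro ⟨f, -⟩
  have := (f 0).2
  rw [Set.mem_compl_iff] at this
  exact this (D0_cov hk (f 0).1)

lemma D0_ncard (hk : 1 ≤ k) : (D0 k).ncard = k := by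
  have hinj : Function.Injective
      (fun i : Fin k => (⟨4*i.val, by have := i.isLt; omega⟩ : Fin (4*k-1))) := by
    intro a b hab
    apply Fin.ext
    have := Fin.mk.injEq .. ▸ hab
    simp only [Fin.mk.injEq] at hab
    omega
  rw [D0, ← Set.image_univ, Set.ncard_image_of_injective _ hinj, Set.ncard_univ]
  simp

end Final

end BstarAux

theorem stmt_6 (k : ℕ) (hk : 1 ≤ k) : iotaP3 (Bstar k) = k := by
  have hmem : k ∈ {m | ∃ D : Set (Fin (4*k-1)), IsP3IsolatingSet (Bstar k) D ∧ D.ncard = m} :=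
    ⟨BstarAux.D0 k, BstarAux.D0_isolating hk, BstarAux.D0_ncard hk⟩
  refine le_antisymm (Nat.sInf_le hmem) (le_csInf ⟨k, hmem⟩ ?_)
  rintro m ⟨D, hiso, rfl⟩
  exact BstarAux.lower_bound hiso hk
end

section
/- For every k ≥ 1, the set {v_1, v_2, …, v_k} is a P_3-isolating set of B_k^*, and hence ι(B_k^*, P_3) ≤ k. -/
open SimpleGraph

lemma bstar_rel_aux (k n : ℕ) (hn : n < 4*k-1) (hk : 1 ≤ k) (hr : n % 4 ≠ 0) :
    BstarRel k (4*(n/4)) n := by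
  set q := n / 4 with hq
  have h4 : n = 4*q + n % 4 := by omega
  have hr4 : n % 4 < 4 := by omega
  unfold BstarRel
  rcases Nat.lt_or_ge (q+1) k with h | h
  · -- block edges inside block q
    refine Or.inl ⟨q, h, ?_⟩
    have hr3 : n % 4 = 1 ∨ n % 4 = 2 ∨ n % 4 = 3 := by omega
    rcases hr3 with h1 | h2 | h3
    · exact Or.inl (by simp only [Prod.mk.injEq, true_and]; omega)
    · exact Or.inr (Or.inl (by simp only [Prod.mk.injEq, true_and]; omega))
    · exact Or.inr (Or.inr (Or.inl (by simp only [Prod.mk.injEq, true_and]; omega)))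
  · -- q = k-1 : last block (triangle)
    have hq' : q = k - 1 := by omega
    refine Or.inr (Or.inl ?_)
    have hr3 : n % 4 = 1 ∨ n % 4 = 2 := by omega
    rcases hr3 with h1 | h2
    · exact Or.inl (by simp only [Prod.mk.injEq, true_and]; omega)
    · exact Or.inr (Or.inl (by simp only [Prod.mk.injEq, true_and]; omega))

theorem stmt_7 (k : ℕ) (hk : 1 ≤ k) :
    IsP3IsolatingSet (Bstar k) {v : Fin (4*k-1) | ∃ i < k, (v : ℕ) = 4 * i} ∧
    iotaP3 (Bstar k) ≤ k := by
  set D : Set (Fin (4*k-1)) := {v : Fin (4*k-1) | ∃ i < k, (v : ℕ) = 4 * i} with hD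
  have hcov : ∀ v : Fin (4*k-1), v ∈ closedNbhd (Bstar k) D := by
    intro v
    rcases eq_or_ne ((v : ℕ) % 4) 0 with h0 | h0
    · left
      exact ⟨(v : ℕ) / 4, by omega, by omega⟩
    · right
      have hvlt : (v : ℕ) < 4*k-1 := v.isLt
      have hdlt : 4 * ((v : ℕ) / 4) < 4*k-1 := by omega
      refine ⟨⟨4 * ((v : ℕ) / 4), hdlt⟩, ⟨(v : ℕ) / 4, by omega, rfl⟩, ?_⟩
      rw [Bstar, SimpleGraph.fromRel_adj]
      refine ⟨?_, Or.inl ?_⟩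
      · intro hcontra
        have : (4 * ((v : ℕ) / 4) : ℕ) = (v : ℕ) := congrArg Fin.val hcontra
        omega
      · exact bstar_rel_aux k (v : ℕ) hvlt hk h0
  have hiso : IsP3IsolatingSet (Bstar k) D := by
    rintro ⟨f, -⟩
    exact (f 0).2 (hcov (f 0).1)
  refine ⟨hiso, ?_⟩
  have hinj : Function.Injective (fun i : Fin k => (⟨4 * (i : ℕ), by omega⟩ : Fin (4*k-1))) := by
    intro i j hij
    have := congrArg Fin.val hij
    simp only at this
    exact Fin.ext (by omega)
  have hrange : D = Set.range (fun i : Fin k => (⟨4 * (i : ℕ), by omega⟩ : Fin (4*k-1))) := by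
    ext v
    constructor
    · rintro ⟨i, hi, hvi⟩
      exact ⟨⟨i, hi⟩, Fin.ext (by simpa using hvi.symm)⟩
    · rintro ⟨i, rfl⟩
      exact ⟨(i : ℕ), i.isLt, rfl⟩
  have hcard : D.ncard = k := by
    rw [hrange, ← Nat.card_coe_set_eq, Nat.card_range_of_injective hinj,
      Nat.card_eq_fintype_card, Fintype.card_fin]
  exact Nat.sInf_le ⟨D, hiso, hcard⟩
end

section
/- For any h ≥ 5 and n ≥ 4(h−2), the graph B_{n,K_3,h} from Construction 3 is a connected n-vertex graph with no induced 6-cycles, has maximum degree exactly h, and satisfies ι(B_{n,K_3,h}, P_3) = ⌊n/4⌋. -/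
open SimpleGraph

/-- Edge relation (on `ℕ`-labels) of `B_{n,K₃,h}`: with `a = ⌊n/4⌋` and `b = n - 3a`,
the path vertices `1,…,b` are labelled `0,…,b-1`, and the triangle `F_i` (`i ∈ [a]`)
has labels `b+3(i-1), b+3(i-1)+1, b+3(i-1)+2`.  The edges are the path edges of `P_b`
minus those of `P_{h-2}`, the star edges `{1, i+1}` for `i ∈ [h-3]`, the triangle
edges, and all edges between the path vertex `i` and the triangle `F_i`. -/
def BK3Rel (n h : ℕ) (x y : ℕ) : Prop :=
  (h - 3 ≤ x ∧ x + 1 ≤ n - 3 * (n / 4) - 1 ∧ y = x + 1) ∨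
  (x = 0 ∧ 1 ≤ y ∧ y ≤ h - 3) ∨
  (∃ i < n / 4,
    (x = i ∧ n - 3 * (n / 4) + 3 * i ≤ y ∧ y ≤ n - 3 * (n / 4) + 3 * i + 2) ∨
    (n - 3 * (n / 4) + 3 * i ≤ x ∧ x < y ∧ y ≤ n - 3 * (n / 4) + 3 * i + 2))

/-- The graph `B_{n,K₃,h}` on `n` vertices. -/
def BK3 (n h : ℕ) : SimpleGraph (Fin n) :=
  SimpleGraph.fromRel (fun x y => BK3Rel n h x.val y.val)


namespace BK3Aux

variable {n h : ℕ}

lemma adj_iff {x y : Fin n} : (BK3 n h).Adj x y ↔ x ≠ y ∧ (BK3Rel n h x.val y.val ∨ BK3Rel n h y.val x.val) :=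
  SimpleGraph.fromRel_adj _ x y

lemma tri_adj (hh : 5 ≤ h) (hn : 4*(h-2) ≤ n) {u v : Fin n}
    (hu : n - 3*(n/4) ≤ u.val) (hv : n - 3*(n/4) ≤ v.val)
    (hsame : (u.val - (n-3*(n/4)))/3 = (v.val - (n-3*(n/4)))/3)
    (hne : u ≠ v) : (BK3 n h).Adj u v := by
  have hun := u.is_lt; have hvn := v.is_lt
  have hne' : u.val ≠ v.val := fun hc => hne (Fin.ext hc)
  rcases Nat.lt_or_ge u.val v.val with hlt | hge
  · exact adj_iff.2 ⟨hne, Or.inl (Or.inr (Or.inr ⟨(u.val - (n-3*(n/4)))/3, by omega, Or.inr (by omega)⟩))⟩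
  · exact adj_iff.2 ⟨hne, Or.inr (Or.inr (Or.inr ⟨(u.val - (n-3*(n/4)))/3, by omega, Or.inr (by omega)⟩))⟩

lemma reach_zero (hh : 5 ≤ h) (hn : 4 * (h - 2) ≤ n) (w : Fin n) :
    (BK3 n h).Reachable w ⟨0, by omega⟩ := by
  suffices H : ∀ (k : ℕ) (w : Fin n), w.val = k → (BK3 n h).Reachable w ⟨0, by omega⟩ by
    exact H w.val w rfl
  intro k
  induction k using Nat.strong_induction_on with
  | _ k ih =>
    intro w hw
    rcases Nat.eq_zero_or_pos w.val with h0 | h1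
    · have hw0 : w = ⟨0, by omega⟩ := Fin.ext h0
      rw [hw0]
    rcases Nat.lt_or_ge w.val (n - 3*(n/4)) with hb | hb
    · rcases le_or_gt w.val (h-3) with hsm | hbig
      · exact ((adj_iff.2 ⟨fun hc => by simp [Fin.ext_iff] at hc; omega,
          Or.inr (Or.inr (Or.inl ⟨rfl, by omega, by omega⟩))⟩ : (BK3 n h).Adj w ⟨0, by omega⟩)).reachable
      · have hadj : (BK3 n h).Adj w ⟨w.val - 1, by omega⟩ :=
          adj_iff.2 ⟨fun hc => by simp [Fin.ext_iff] at hc; omega,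
            Or.inr (Or.inl (by simp; omega))⟩
        exact hadj.reachable.trans (ih (w.val - 1) (by omega) _ rfl)
    · have hwn := w.is_lt
      have hadj : (BK3 n h).Adj w ⟨(w.val - (n-3*(n/4)))/3, by omega⟩ :=
        adj_iff.2 ⟨fun hc => by simp [Fin.ext_iff] at hc; omega,
          Or.inr (Or.inr (Or.inr ⟨(w.val - (n-3*(n/4)))/3, by omega, Or.inl ⟨rfl, by omega, by omega⟩⟩))⟩
      exact hadj.reachable.trans (ih ((w.val - (n-3*(n/4)))/3) (by omega) _ rfl)

lemma rel_tri (hh : 5 ≤ h) (hn : 4 * (h-2) ≤ n) {x y : ℕ}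
    (hb : n - 3*(n/4) ≤ x) (hx : x < n) (hy : y < n)
    (hr : BK3Rel n h x y ∨ BK3Rel n h y x) :
    (y = (x - (n - 3*(n/4)))/3) ∨
    (n - 3*(n/4) ≤ y ∧ (y - (n - 3*(n/4)))/3 = (x - (n - 3*(n/4)))/3 ∧ y ≠ x) := by
  unfold BK3Rel at hr
  rcases hr with (h1|h1|⟨i,hi,h1⟩)|(h1|h1|⟨i,hi,h1⟩) <;> omega

lemma rel_small (hh : 5 ≤ h) (hn : 4 * (h-2) ≤ n) {x y : ℕ}
    (h1x : 1 ≤ x) (hxb : x < n - 3*(n/4)) (hyx : y < x)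
    (hr : BK3Rel n h x y ∨ BK3Rel n h y x) :
    (x ≤ h - 3 ∧ y = 0) ∨ (h - 2 ≤ x ∧ y + 1 = x) := by
  unfold BK3Rel at hr
  rcases hr with (h1|h1|⟨i,hi,h1⟩)|(h1|h1|⟨i,hi,h1⟩) <;> omega

lemma rel_tri' (hh : 5 ≤ h) (hn : 4 * (h-2) ≤ n) {x y : ℕ}
    (hb : n - 3*(n/4) ≤ x) (hx : x < n) (hy : y < n)
    (hr : BK3Rel n h x y ∨ BK3Rel n h y x) :
    (y = (x - (n - 3*(n/4)))/3) ∨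
    (n - 3*(n/4) ≤ y ∧ (y - (n - 3*(n/4)))/3 = (x - (n - 3*(n/4)))/3 ∧ y ≠ x) := by
  unfold BK3Rel at hr
  rcases hr with (h1|h1|⟨i,hi,h1⟩)|(h1|h1|⟨i,hi,h1⟩) <;> omega


lemma no_c6 (hh : 5 ≤ h) (hn : 4 * (h-2) ≤ n) : ¬ HasInducedC6 (BK3 n h) := by
  rintro ⟨f, hf⟩
  have dec1 : ∀ a : Fin 6, (a+1) - a = 1 ∨ a - (a+1) = 1 := by decide
  have dec5 : ∀ a : Fin 6, (a+5) - a = 1 ∨ a - (a+5) = 1 := by decide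
  have dec54 : ∀ a : Fin 6, (a+4) - (a+5) = 1 ∨ (a+5) - (a+4) = 1 := by decide
  have dec21 : ∀ a : Fin 6, (a+2) - (a+1) = 1 ∨ (a+1) - (a+2) = 1 := by decide
  have decn40 : ∀ a : Fin 6, ¬((a+4) - a = 1 ∨ a - (a+4) = 1) := by decide
  have decn20 : ∀ a : Fin 6, ¬((a+2) - a = 1 ∨ a - (a+2) = 1) := by decide
  have decn15 : ∀ a : Fin 6, ¬((a+1) - (a+5) = 1 ∨ (a+5) - (a+1) = 1) := by decide
  have decne : ∀ a : Fin 6, a+1 ≠ a+5 ∧ a+4 ≠ a+1 ∧ a+2 ≠ a+5 ∧ a+4 ≠ a ∧ a+2 ≠ a ∧ a+1 ≠ a ∧ a+5 ≠ a := by decide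
  have hcyc : ∀ a c : Fin 6, (cycleGraph 6).Adj a c ↔ (a - c = 1 ∨ c - a = 1) :=
    fun a c => cycleGraph_adj
  -- adjacency of f at cycle-consecutive indices
  have hadj : ∀ (a : Fin 6) (d : Fin 6), (d - a = 1 ∨ a - d = 1) → (BK3 n h).Adj (f d) (f a) :=
    fun a d hd => (hf d a).2 ((hcyc d a).2 hd)
  have hfne : ∀ (a d : Fin 6), a ≠ d → f a ≠ f d := fun a d hne hc => hne (f.injective hc)
  -- step 1 : no triangle vertices in the image
  have hpath : ∀ a : Fin 6, (f a).val < n - 3*(n/4) := by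
    intro a
    by_contra hb'
    push_neg at hb'
    -- classification of both cycle-neighbours
    have P1 := rel_tri hh hn hb' (f a).is_lt (f (a+1)).is_lt
      (Or.symm (adj_iff.1 (hadj a (a+1) (dec1 a))).2)
    have P5 := rel_tri hh hn hb' (f a).is_lt (f (a+5)).is_lt
      (Or.symm (adj_iff.1 (hadj a (a+5) (dec5 a))).2)
    have hne15 : f (a+1) ≠ f (a+5) := hfne _ _ (decne a).1
    rcases P1 with P1 | P1
    · rcases P5 with P5 | P5
      · exact hne15 (Fin.ext (P1.trans P5.symm))
      · -- f(a+5) in triangle, f(a+1) = path vertex i ; look at a+4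
        have hb5 : n - 3*(n/4) ≤ (f (a+5)).val := P5.1
        have P4 := rel_tri hh hn hb5 (f (a+5)).is_lt (f (a+4)).is_lt
          (Or.symm (adj_iff.1 (hadj (a+5) (a+4) (dec54 a))).2)
        rcases P4 with P4 | P4
        · -- f(a+4) = i = f(a+1) : contradiction
          have : f (a+4) = f (a+1) := Fin.ext (by rw [P4, P1]; rw [P5.2.1])
          exact (decne a).2.1 (f.injective this)
        · -- f(a+4) and f(a) in same triangle : adjacent, but not cycle-adjacent
          have hadj40 : (BK3 n h).Adj (f (a+4)) (f a) :=
            tri_adj hh hn P4.1 hb' (by rw [P4.2.1, P5.2.1]) (hfne _ _ (decne a).2.2.2.1)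
          exact decn40 a ((hcyc _ _).1 ((hf _ _).1 hadj40))
    · rcases P5 with P5 | P5
      · -- symmetric : f(a+1) in triangle, f(a+5) = i ; look at a+2
        have hb1 : n - 3*(n/4) ≤ (f (a+1)).val := P1.1
        have P2 := rel_tri hh hn hb1 (f (a+1)).is_lt (f (a+2)).is_lt
          (Or.symm (adj_iff.1 (hadj (a+1) (a+2) (dec21 a))).2)
        rcases P2 with P2 | P2
        · have : f (a+2) = f (a+5) := Fin.ext (by rw [P2, P5]; rw [P1.2.1])
          exact (decne a).2.2.1 (f.injective this)
        · have hadj20 : (BK3 n h).Adj (f (a+2)) (f a) :=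
            tri_adj hh hn P2.1 hb' (by rw [P2.2.1, P1.2.1]) (hfne _ _ (decne a).2.2.2.2.1)
          exact decn20 a ((hcyc _ _).1 ((hf _ _).1 hadj20))
      · -- both in the same triangle : adjacent but not cycle adjacent
        have hadj15 : (BK3 n h).Adj (f (a+1)) (f (a+5)) :=
          tri_adj hh hn P1.1 P5.1 (by rw [P1.2.1, P5.2.1]) hne15
        exact decn15 a ((hcyc _ _).1 ((hf _ _).1 hadj15))
  -- step 2 : maximal label argument among path vertices
  obtain ⟨a0, -, ha0⟩ := Finset.exists_max_image (Finset.univ : Finset (Fin 6))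
    (fun a => (f a).val) ⟨0, Finset.mem_univ 0⟩
  have hne1 : f (a0+1) ≠ f a0 := hfne _ _ (decne a0).2.2.2.2.2.1
  have hne5 : f (a0+5) ≠ f a0 := hfne _ _ (decne a0).2.2.2.2.2.2
  have hlt1 : (f (a0+1)).val < (f a0).val :=
    lt_of_le_of_ne (ha0 _ (Finset.mem_univ _)) (fun hc => hne1 (Fin.ext hc))
  have hlt5 : (f (a0+5)).val < (f a0).val :=
    lt_of_le_of_ne (ha0 _ (Finset.mem_univ _)) (fun hc => hne5 (Fin.ext hc))
  have Q1 := rel_small hh hn (by omega) (hpath a0) hlt1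
    (Or.symm (adj_iff.1 (hadj a0 (a0+1) (dec1 a0))).2)
  have Q5 := rel_small hh hn (by omega) (hpath a0) hlt5
    (Or.symm (adj_iff.1 (hadj a0 (a0+5) (dec5 a0))).2)
  have : f (a0+1) = f (a0+5) := Fin.ext (by omega)
  exact (decne a0).1 (f.injective this)

lemma rel_nbr0 (hh : 5 ≤ h) {y : ℕ}
    (hr : BK3Rel n h 0 y ∨ BK3Rel n h y 0) :
    (1 ≤ y ∧ y ≤ h - 3) ∨ (n - 3*(n/4) ≤ y ∧ y ≤ n - 3*(n/4) + 2) := by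
  unfold BK3Rel at hr
  rcases hr with (h1|h1|⟨i,hi,h1⟩)|(h1|h1|⟨i,hi,h1⟩) <;> omega

lemma rel_mid {x y : ℕ}
    (h1x : 1 ≤ x) (hxb : x < n - 3*(n/4))
    (hr : BK3Rel n h x y ∨ BK3Rel n h y x) :
    (x ≤ h - 3 ∧ (y = 0 ∨ y = x + 1 ∨ (x < n/4 ∧ n - 3*(n/4) + 3*x ≤ y ∧ y ≤ n - 3*(n/4) + 3*x + 2))) ∨
    (h - 2 ≤ x ∧ (y + 1 = x ∨ y = x + 1 ∨ (x < n/4 ∧ n - 3*(n/4) + 3*x ≤ y ∧ y ≤ n - 3*(n/4) + 3*x + 2))) := by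
  unfold BK3Rel at hr
  rcases hr with (h1|h1|⟨i,hi,h1⟩)|(h1|h1|⟨i,hi,h1⟩) <;> omega

lemma ncard_le_of_val_subset {s : Set (Fin n)} {T : Finset ℕ}
    (hsub : ∀ x ∈ s, x.val ∈ T) : s.ncard ≤ T.card := by
  classical
  rw [← Set.ncard_image_of_injective s Fin.val_injective, ← Set.ncard_coe_finset]
  exact Set.ncard_le_ncard (by rintro y ⟨x, hx, rfl⟩; exact hsub x hx) (Finset.finite_toSet T)

lemma card5 (a b c d e : ℕ) : ({a,b,c,d,e} : Finset ℕ).card ≤ 5 :=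
  (Finset.card_insert_le _ _).trans (Nat.succ_le_succ ((Finset.card_insert_le _ _).trans
    (Nat.succ_le_succ ((Finset.card_insert_le _ _).trans (Nat.succ_le_succ
      ((Finset.card_insert_le _ _).trans (Nat.succ_le_succ (le_of_eq (Finset.card_singleton _)))))))))

lemma card4 (a b c d : ℕ) : ({a,b,c,d} : Finset ℕ).card ≤ 4 :=
  (Finset.card_insert_le _ _).trans (Nat.succ_le_succ ((Finset.card_insert_le _ _).trans
    (Nat.succ_le_succ ((Finset.card_insert_le _ _).trans (Nat.succ_le_succ
      (le_of_eq (Finset.card_singleton _)))))))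

lemma deg_le (hh : 5 ≤ h) (hn : 4 * (h-2) ≤ n) (v : Fin n) :
    ((BK3 n h).neighborSet v).ncard ≤ h := by
  have hvn := v.is_lt
  rcases Nat.eq_zero_or_pos v.val with h0 | h1
  · -- v = 0
    refine le_trans (ncard_le_of_val_subset (T := Finset.Icc 1 (h-3) ∪
      Finset.Icc (n - 3*(n/4)) (n - 3*(n/4) + 2)) ?_) ?_
    · intro x hx
      have hr := (adj_iff.1 hx).2
      rw [h0] at hr
      have := rel_nbr0 hh hr
      simp only [Finset.mem_union, Finset.mem_Icc]
      omega
    · have := Finset.card_union_le (Finset.Icc 1 (h-3))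
        (Finset.Icc (n - 3*(n/4)) (n - 3*(n/4) + 2))
      rw [Nat.card_Icc, Nat.card_Icc] at this
      omega
  rcases Nat.lt_or_ge v.val (n - 3*(n/4)) with hb | hb
  · -- middle path vertex: two cases depending on v.val vs h-3
    rcases le_or_gt v.val (h-3) with hsm | hbig
    · refine le_trans (ncard_le_of_val_subset (T := {0, v.val + 1, n - 3*(n/4) + 3*v.val,
        n - 3*(n/4) + 3*v.val + 1, n - 3*(n/4) + 3*v.val + 2}) ?_) (le_trans (card5 _ _ _ _ _) (by omega))
      intro x hx
      have := rel_mid h1 hb (adj_iff.1 hx).2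
      simp only [Finset.mem_insert, Finset.mem_singleton]
      omega
    · refine le_trans (ncard_le_of_val_subset (T := {v.val - 1, v.val + 1, n - 3*(n/4) + 3*v.val,
        n - 3*(n/4) + 3*v.val + 1, n - 3*(n/4) + 3*v.val + 2}) ?_) (le_trans (card5 _ _ _ _ _) (by omega))
      intro x hx
      have := rel_mid h1 hb (adj_iff.1 hx).2
      simp only [Finset.mem_insert, Finset.mem_singleton]
      omega
  · -- triangle vertex
    refine le_trans (ncard_le_of_val_subset (T := {(v.val - (n - 3*(n/4)))/3,
      n - 3*(n/4) + 3*((v.val - (n - 3*(n/4)))/3), n - 3*(n/4) + 3*((v.val - (n - 3*(n/4)))/3) + 1,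
      n - 3*(n/4) + 3*((v.val - (n - 3*(n/4)))/3) + 2}) ?_) (le_trans (card4 _ _ _ _) (by omega))
    intro x hx
    have := rel_tri' hh hn hb v.is_lt x.is_lt (adj_iff.1 hx).2
    simp only [Finset.mem_insert, Finset.mem_singleton]
    omega

lemma deg_zero (hh : 5 ≤ h) (hn : 4 * (h-2) ≤ n) :
    ((BK3 n h).neighborSet ⟨0, by omega⟩).ncard = h := by
  classical
  set b := n - 3*(n/4) with hbdef
  have himg : Fin.val '' ((BK3 n h).neighborSet ⟨0, by omega⟩) =
      ↑(Finset.Icc 1 (h-3) ∪ Finset.Icc b (b+2)) := by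
    ext y
    simp only [Set.mem_image, Finset.coe_union, Set.mem_union, Finset.coe_Icc, Set.mem_Icc]
    constructor
    · rintro ⟨x, hx, rfl⟩
      have hr := (adj_iff.1 hx).2
      exact rel_nbr0 hh hr
    · intro hy
      have hyn : y < n := by omega
      refine ⟨⟨y, hyn⟩, ?_, rfl⟩
      show (BK3 n h).Adj _ _
      rcases hy with hy | hy
      · exact adj_iff.2 ⟨fun hc => by simp [Fin.ext_iff] at hc; omega,
          Or.inl (Or.inr (Or.inl ⟨rfl, by show 1 ≤ y; omega, by show y ≤ h - 3; omega⟩))⟩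
      · exact adj_iff.2 ⟨fun hc => by simp [Fin.ext_iff] at hc; omega,
          Or.inl (Or.inr (Or.inr ⟨0, by omega, Or.inl ⟨rfl,
            by show n - 3*(n/4) + 3*0 ≤ y; omega, by show y ≤ n - 3*(n/4) + 3*0 + 2; omega⟩⟩))⟩
  have := congrArg Set.ncard himg
  rw [Set.ncard_image_of_injective _ Fin.val_injective, Set.ncard_coe_finset] at this
  rw [this, Finset.card_union_of_disjoint, Nat.card_Icc, Nat.card_Icc]
  · omega
  · rw [Finset.disjoint_left]
    intro x hx hx'
    simp only [Finset.mem_Icc] at hx hx'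
    omega

-- upper bound construction
lemma iso_upper (hh : 5 ≤ h) (hn : 4 * (h-2) ≤ n) :
    IsP3IsolatingSet (BK3 n h) {v : Fin n | v.val < n/4} := by
  rintro ⟨f, hf⟩
  -- any vertex outside the closed neighbourhood has label in (n/4, n-3*(n/4))
  have hwin : ∀ x : Fin n, x ∈ (closedNbhd (BK3 n h) {v : Fin n | v.val < n/4})ᶜ →
      n/4 + 1 ≤ x.val ∧ x.val + 1 ≤ n - 3*(n/4) := by
    intro x hx
    rw [Set.mem_compl_iff] at hx
    by_contra hcon
    apply hx
    have hxn := x.is_lt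
    rcases Nat.lt_or_ge x.val (n/4) with hlt | hge
    · exact Or.inl hlt
    rcases Nat.lt_or_ge x.val (n - 3*(n/4)) with hlt2 | hge2
    · -- then x.val = n/4 exactly, neighbour of n/4 - 1
      have hxe : x.val = n/4 := by omega
      refine Or.inr ⟨⟨n/4 - 1, by omega⟩, by simp; omega, ?_⟩
      exact adj_iff.2 ⟨fun hc => by simp [Fin.ext_iff] at hc; omega,
        Or.inl (Or.inl ⟨by show h - 3 ≤ n/4 - 1; omega, by show n/4 - 1 + 1 ≤ _; omega,
          by show x.val = n/4 - 1 + 1; omega⟩)⟩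
    · -- triangle vertex: neighbour of its attach vertex
      refine Or.inr ⟨⟨(x.val - (n - 3*(n/4)))/3, by omega⟩, by simp; omega, ?_⟩
      exact adj_iff.2 ⟨fun hc => by simp [Fin.ext_iff] at hc; omega,
        Or.inl (Or.inr (Or.inr ⟨(x.val - (n - 3*(n/4)))/3, by omega,
          Or.inl ⟨rfl, by omega, by omega⟩⟩))⟩
  have h0 := hwin _ (f 0).2
  have h1 := hwin _ (f 1).2
  have h2 := hwin _ (f 2).2
  have hne01 : ((f 0 : _) : Fin n).val ≠ ((f 1 : _) : Fin n).val := by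
    intro hc
    exact (by decide : (0 : Fin 3) ≠ 1) (f.injective (Subtype.ext (Fin.ext hc)))
  have hne02 : ((f 0 : _) : Fin n).val ≠ ((f 2 : _) : Fin n).val := by
    intro hc
    exact (by decide : (0 : Fin 3) ≠ 2) (f.injective (Subtype.ext (Fin.ext hc)))
  have hne12 : ((f 1 : _) : Fin n).val ≠ ((f 2 : _) : Fin n).val := by
    intro hc
    exact (by decide : (1 : Fin 3) ≠ 2) (f.injective (Subtype.ext (Fin.ext hc)))
  omega

lemma upper_ncard : ({v : Fin n | v.val < n/4} : Set (Fin n)).ncard = n/4 := by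
  classical
  have himg : Fin.val '' ({v : Fin n | v.val < n/4} : Set (Fin n)) = ↑(Finset.range (n/4)) := by
    ext y
    simp only [Set.mem_image, Set.mem_setOf_eq, Finset.coe_range, Set.mem_Iio]
    constructor
    · rintro ⟨x, hx, rfl⟩; exact hx
    · intro hy
      have hyn : y < n := by
        have := Nat.div_le_self n 4; omega
      exact ⟨⟨y, hyn⟩, hy, rfl⟩
  have := congrArg Set.ncard himg
  rwa [Set.ncard_image_of_injective _ Fin.val_injective, Set.ncard_coe_finset,
    Finset.card_range] at this

-- lower bound
lemma iso_lower (hh : 5 ≤ h) (hn : 4 * (h-2) ≤ n) {D : Set (Fin n)}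
    (hD : IsP3IsolatingSet (BK3 n h) D) : n/4 ≤ D.ncard := by
  classical
  set b := n - 3*(n/4) with hbdef
  have hit : ∀ i : Fin (n/4), ∃ d ∈ D,
      (d.val = i.val ∨ (b + 3*i.val ≤ d.val ∧ d.val ≤ b + 3*i.val + 2)) := by
    intro i
    by_contra hno
    push_neg at hno
    apply hD
    have hi := i.is_lt
    have hb2 : b + 3*i.val + 2 < n := by omega
    -- the three triangle vertices are outside the closed neighbourhood
    have hout : ∀ (j : ℕ) (_ : j ≤ 2), (⟨b + 3*i.val + j, by omega⟩ : Fin n) ∉ closedNbhd (BK3 n h) D := by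
      intro j hj hmem
      rcases hmem with hmem | ⟨d, hd, hadj⟩
      · have h2 := (hno _ hmem).2 (by show b + 3*i.val ≤ b + 3*i.val + j; omega)
        exact (by omega : ¬ (b + 3*i.val + 2 < b + 3*i.val + j)) h2
      · have hdn := d.is_lt
        have hcl := rel_tri' hh hn (x := b + 3*i.val + j) (y := d.val)
          (by omega) (by omega) hdn (Or.symm (adj_iff.1 hadj).2)
        rcases hno d hd with ⟨hno1, hno2⟩
        rcases hcl with h' | h'
        · exact hno1 (by omega)
        · have h3 := hno2 (by omega)
          omega
    refine ⟨⟨fun j => ⟨⟨b + 3*i.val + j.val, by have := j.is_lt; omega⟩,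
      hout j.val (by have := j.is_lt; omega)⟩, ?_⟩, ?_⟩
    · intro x y hxy
      have hv : b + 3*i.val + x.val = b + 3*i.val + y.val :=
        congrArg (fun z : ↥((closedNbhd (BK3 n h) D)ᶜ) => (z : Fin n).val) hxy
      exact Fin.ext (by omega)
    · intro p q hpq
      rw [SimpleGraph.pathGraph_adj] at hpq
      have hp := p.is_lt; have hq := q.is_lt
      exact tri_adj hh hn
        (by show n - 3*(n/4) ≤ b + 3*i.val + p.val; omega)
        (by show n - 3*(n/4) ≤ b + 3*i.val + q.val; omega)
        (by show (b + 3*i.val + p.val - (n - 3*(n/4)))/3 = (b + 3*i.val + q.val - (n - 3*(n/4)))/3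
            omega)
        (by intro hc
            exact (by omega : ¬(b + 3*i.val + p.val = b + 3*i.val + q.val)) (congrArg Fin.val hc))
  choose F hFD hFP using hit
  have hFinj : Function.Injective F := by
    intro i j hij
    have Pi := hFP i; have Pj := hFP j
    rw [hij] at Pi
    have hi := i.is_lt; have hj := j.is_lt
    have : i.val = j.val := by omega
    exact Fin.ext this
  calc n/4 = (Set.univ : Set (Fin (n/4))).ncard := by simp [Set.ncard_univ]
    _ = (F '' Set.univ).ncard := (Set.ncard_image_of_injective _ hFinj).symm
    _ ≤ D.ncard := by
        rw [Set.image_univ]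
        exact Set.ncard_le_ncard (by rintro _ ⟨i, rfl⟩; exact hFD i) (Set.toFinite D)

end BK3Aux

theorem stmt_9 (n h : ℕ) (hh : 5 ≤ h) (hn : 4 * (h - 2) ≤ n) :
    (BK3 n h).Connected ∧ ¬ HasInducedC6 (BK3 n h) ∧
    (∀ v, ((BK3 n h).neighborSet v).ncard ≤ h) ∧
    (∃ v, ((BK3 n h).neighborSet v).ncard = h) ∧
    iotaP3 (BK3 n h) = n / 4 := by
  refine ⟨?_, BK3Aux.no_c6 hh hn, fun v => BK3Aux.deg_le hh hn v,
    ⟨⟨0, by omega⟩, BK3Aux.deg_zero hh hn⟩, ?_⟩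
  · rw [SimpleGraph.connected_iff_exists_forall_reachable]
    exact ⟨⟨0, by omega⟩, fun w => (BK3Aux.reach_zero hh hn w).symm⟩
  · apply le_antisymm
    · exact Nat.sInf_le ⟨_, BK3Aux.iso_upper hh hn, BK3Aux.upper_ncard⟩
    · refine le_csInf ⟨_, _, BK3Aux.iso_upper hh hn, BK3Aux.upper_ncard⟩ ?_
      rintro m ⟨D, hD, rfl⟩
      exact BK3Aux.iso_lower hh hn hD
end

section
/- In the graph B_{n,K_3,h} (h ≥ 5, n ≥ 4(h−2)), every P_3-isolating set D intersects V(F_i) ∪ {i} for each i ∈ [⌊n/4⌋], and consequently ι(B_{n,K_3,h}, P_3) ≥ ⌊n/4⌋. -/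
open SimpleGraph

theorem stmt_10 (n h : ℕ) (hh : 5 ≤ h) (hn : 4 * (h - 2) ≤ n) :
    (∀ D : Set (Fin n), IsP3IsolatingSet (BK3 n h) D →
      ∀ i < n / 4, ∃ v ∈ D, (v : ℕ) = i ∨
        (n - 3 * (n / 4) + 3 * i ≤ (v : ℕ) ∧ (v : ℕ) ≤ n - 3 * (n / 4) + 3 * i + 2)) ∧
    n / 4 ≤ iotaP3 (BK3 n h) := by
  have key : ∀ D : Set (Fin n), IsP3IsolatingSet (BK3 n h) D →
      ∀ i < n / 4, ∃ v ∈ D, (v : ℕ) = i ∨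
        (n - 3 * (n / 4) + 3 * i ≤ (v : ℕ) ∧ (v : ℕ) ≤ n - 3 * (n / 4) + 3 * i + 2) := by
    intro D hD i hi
    by_contra hc
    -- classification of neighbours of a triangle vertex
    have hnbr : ∀ d v : Fin n, n - 3*(n/4) + 3*i ≤ (v:ℕ) → (v:ℕ) ≤ n - 3*(n/4) + 3*i + 2 →
        (BK3 n h).Adj d v →
        (d:ℕ) = i ∨ (n - 3*(n/4) + 3*i ≤ (d:ℕ) ∧ (d:ℕ) ≤ n - 3*(n/4) + 3*i + 2) := by
      intro d v hv1 hv2 hadj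
      rw [BK3, SimpleGraph.fromRel_adj] at hadj
      obtain ⟨hne, hrel | hrel⟩ := hadj <;>
        rcases hrel with ⟨h1,h2,h3⟩ | ⟨h1,h2,h3⟩ | ⟨j, hj, ⟨h1,h2,h3⟩ | ⟨h1,h2,h3⟩⟩ <;>
        omega
    -- triangle vertices are pairwise adjacent
    have hadj2 : ∀ u v : Fin n, n - 3*(n/4) + 3*i ≤ (u:ℕ) → (u:ℕ) ≤ n - 3*(n/4) + 3*i + 2 →
        n - 3*(n/4) + 3*i ≤ (v:ℕ) → (v:ℕ) ≤ n - 3*(n/4) + 3*i + 2 → (u:ℕ) ≠ (v:ℕ) →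
        (BK3 n h).Adj u v := by
      intro u v hu1 hu2 hv1 hv2 hne
      rw [BK3, SimpleGraph.fromRel_adj]
      refine ⟨fun e => hne (congrArg Fin.val e), ?_⟩
      unfold BK3Rel
      rcases Nat.lt_or_ge (u:ℕ) (v:ℕ) with hlt | hge
      · exact Or.inl (Or.inr (Or.inr ⟨i, hi, Or.inr ⟨hu1, hlt, hv2⟩⟩))
      · exact Or.inr (Or.inr (Or.inr ⟨i, hi, Or.inr ⟨hv1, by omega, hu2⟩⟩))
    -- the three triangle vertices
    have hlt3 : ∀ k : Fin 3, n - 3*(n/4) + 3*i + (k:ℕ) < n := by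
      intro k; have := k.isLt; omega
    have hbound : ∀ k : Fin 3, n - 3*(n/4) + 3*i ≤ n - 3*(n/4) + 3*i + (k:ℕ) ∧
        n - 3*(n/4) + 3*i + (k:ℕ) ≤ n - 3*(n/4) + 3*i + 2 := by
      intro k; have := k.isLt; omega
    have hmem : ∀ k : Fin 3,
        (⟨n - 3*(n/4) + 3*i + (k:ℕ), hlt3 k⟩ : Fin n) ∈ (closedNbhd (BK3 n h) D)ᶜ := by
      intro k
      intro hmem
      rcases hmem with hmem | ⟨d, hd, hadj⟩
      · exact hc ⟨_, hmem, Or.inr ⟨(hbound k).1, (hbound k).2⟩⟩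
      · exact hc ⟨d, hd, hnbr d _ (hbound k).1 (hbound k).2 hadj⟩
    apply hD
    refine ⟨⟨fun k => ⟨⟨n - 3*(n/4) + 3*i + (k:ℕ), hlt3 k⟩, hmem k⟩, ?_⟩, ?_⟩
    · intro j k hjk
      have hv : n - 3*(n/4) + 3*i + (j:ℕ) = n - 3*(n/4) + 3*i + (k:ℕ) :=
        congrArg (fun x => ((x : {v // v ∈ (closedNbhd (BK3 n h) D)ᶜ}) : Fin n).val) hjk
      exact Fin.ext (by omega)
    · intro a b hab
      have hne : (a:ℕ) ≠ (b:ℕ) := fun e => hab.ne (Fin.ext e)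
      exact hadj2 _ _ (hbound a).1 (hbound a).2 (hbound b).1 (hbound b).2
        (show n - 3*(n/4) + 3*i + (a:ℕ) ≠ n - 3*(n/4) + 3*i + (b:ℕ) by omega)
  refine ⟨key, ?_⟩
  -- the isolating-set family is nonempty (take D = univ)
  have huniv : IsP3IsolatingSet (BK3 n h) Set.univ := by
    unfold IsP3IsolatingSet ContainsCopy
    rintro ⟨f, hf⟩
    have := (f 0).2
    simp [closedNbhd] at this
  rw [iotaP3]
  refine le_csInf ⟨n, Set.univ, huniv, by simp [Set.ncard_univ]⟩ ?_
  rintro m ⟨D, hD, rfl⟩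
  -- build an injection Fin (n/4) → D
  have hchoice : ∀ j : Fin (n/4), ∃ v : Fin n, v ∈ D ∧ ((v:ℕ) = (j:ℕ) ∨
      (n - 3*(n/4) + 3*(j:ℕ) ≤ (v:ℕ) ∧ (v:ℕ) ≤ n - 3*(n/4) + 3*(j:ℕ) + 2)) := by
    intro j
    obtain ⟨v, hv, hp⟩ := key D hD j j.isLt
    exact ⟨v, hv, hp⟩
  choose g hg1 hg2 using hchoice
  have hinj : Function.Injective g := by
    intro j k hjk
    have hj := j.isLt
    have hk := k.isLt
    have h2j := hg2 j
    have h2k := hg2 k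
    rw [hjk] at h2j
    exact Fin.ext (by omega)
  have hcard : Nat.card (Fin (n/4)) ≤ Nat.card D := by
    apply Nat.card_le_card_of_injective (fun j => (⟨g j, hg1 j⟩ : D))
    intro j k hjk
    exact hinj (congrArg Subtype.val hjk)
  simpa [Nat.card_coe_set_eq] using hcard
end
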